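/- arXiv:2006.03518 — 6 statements merged into one kernel-verified Lean document; each statement's English description precedes it below -/
import Mathlib

section
/- Uniqueness for the discrete time-fractional MFG scheme: Suppose g is a numerical Hamiltonian that is C¹ in q, satisfies (G1) (nonincreasing in q₁ and q₃, nondecreasing in q₂ and q₄) and (G4) (q ↦ g(x_{i,j},q) convex for each (i,j)), and suppose f_h maps grid functions to grid functions and is strictly monotone: (f_h[M] − f_h[M̄], M − M̄)₂ ≥ 0 for all M, M̄ ∈ 𝒦_h, with equality only if M = M̄. If (U, M) = ((Uⁿ)ₙ₌₀ᴺ, (Mⁿ)ₙ₌₀ᴺ) and (Ũ, M̃) are two solutions of the discrete system with the same terminal datum Uᴺ = Ũᴺ, the same initial datum M⁰ = M̃⁰, and Mⁿ, M̃ⁿ ∈ 𝒦_h for all n, then Uⁿ = Ũⁿ and Mⁿ = M̃ⁿ for all n = 0,…,N. -/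
open Real Finset

noncomputable section

/-- forward L1 coefficients `c_k^n` -/
def cF (α : ℝ) (n k : ℕ) : ℝ :=
  if k = 0 then (n : ℝ) ^ (1 - α) - ((n : ℝ) - 1) ^ (1 - α)
  else 2 * ((n : ℝ) - k) ^ (1 - α) - ((n : ℝ) + 1 - k) ^ (1 - α) - ((n : ℝ) - 1 - k) ^ (1 - α)

/-- backward L1 coefficients `c̄_n^k` (with horizon `N`) -/
def cB (α : ℝ) (N n k : ℕ) : ℝ :=
  if k = N then ((N : ℝ) - n) ^ (1 - α) - ((N : ℝ) - 1 - n) ^ (1 - α)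
  else 2 * ((k : ℝ) - n) ^ (1 - α) - ((k : ℝ) + 1 - n) ^ (1 - α) - ((k : ℝ) - 1 - n) ^ (1 - α)

/-- `ρ_α = Γ(2-α) Δt^α` -/
def rhoA (α Δt : ℝ) : ℝ := Real.Gamma (2 - α) * Δt ^ α

/-- discrete forward Caputo derivative (L1 scheme) -/
def DF (α Δt : ℝ) (w : ℕ → ℝ) (n : ℕ) : ℝ :=
  (rhoA α Δt)⁻¹ * (w n - ∑ k ∈ Finset.range n, cF α n k * w k)

/-- discrete backward Caputo derivative (L1 scheme) -/
def DB (α Δt : ℝ) (N : ℕ) (w : ℕ → ℝ) (n : ℕ) : ℝ :=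
  (rhoA α Δt)⁻¹ * (w n - ∑ k ∈ Finset.Icc (n + 1) N, cB α N n k * w k)

/-- grid functions on the uniform periodic grid of the 2-torus -/
abbrev GridFun (Nh : ℕ) := ZMod Nh → ZMod Nh → ℝ

/-- mesh step `h = 1/N_h` -/
def hstep (Nh : ℕ) : ℝ := (Nh : ℝ)⁻¹

/-- grid point `x_{i,j} = (i h, j h)` -/
def gridPt (Nh : ℕ) (i j : ZMod Nh) : ℝ × ℝ :=
  ((i.val : ℝ) * hstep Nh, (j.val : ℝ) * hstep Nh)

/-- forward difference in the first variable -/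
def D1p (Nh : ℕ) (U : GridFun Nh) (i j : ZMod Nh) : ℝ := (U (i + 1) j - U i j) / hstep Nh

/-- forward difference in the second variable -/
def D2p (Nh : ℕ) (U : GridFun Nh) (i j : ZMod Nh) : ℝ := (U i (j + 1) - U i j) / hstep Nh

/-- the discrete gradient `[D_h U]_{i,j} ∈ ℝ⁴` -/
def Dh (Nh : ℕ) (U : GridFun Nh) (i j : ZMod Nh) : Fin 4 → ℝ :=
  ![D1p Nh U i j, D1p Nh U (i - 1) j, D2p Nh U i j, D2p Nh U i (j - 1)]

/-- five point discrete Laplacian -/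
def lapl (Nh : ℕ) (U : GridFun Nh) (i j : ZMod Nh) : ℝ :=
  -(4 * U i j - U (i + 1) j - U (i - 1) j - U i (j + 1) - U i (j - 1)) / (hstep Nh) ^ 2

/-- the scalar product `(U,V)₂ = h² Σ_{i,j} U_{i,j} V_{i,j}` -/
def inner2 (Nh : ℕ) [NeZero Nh] (U V : GridFun Nh) : ℝ :=
  (hstep Nh) ^ 2 * ∑ i : ZMod Nh, ∑ j : ZMod Nh, U i j * V i j

/-- the set `𝒦_h` of discrete probability measures -/
def Kh (Nh : ℕ) [NeZero Nh] : Set (GridFun Nh) :=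
  {M | (∀ i j, 0 ≤ M i j) ∧ inner2 Nh M (fun _ _ => 1) = 1}

/-- partial derivative `∂_{q_k} g(q)` -/
def gq (g : (Fin 4 → ℝ) → ℝ) (q : Fin 4 → ℝ) (k : Fin 4) : ℝ :=
  fderiv ℝ g q (Pi.single k 1)

/-- (G1): `g` nonincreasing in `q₁, q₃` and nondecreasing in `q₂, q₄` -/
def G1 (g : (Fin 4 → ℝ) → ℝ) : Prop :=
  (∀ q : Fin 4 → ℝ, Antitone fun s => g (Function.update q 0 s)) ∧
  (∀ q : Fin 4 → ℝ, Monotone fun s => g (Function.update q 1 s)) ∧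
  (∀ q : Fin 4 → ℝ, Antitone fun s => g (Function.update q 2 s)) ∧
  (∀ q : Fin 4 → ℝ, Monotone fun s => g (Function.update q 3 s))

/-- the discrete transport operator `𝓑_{i,j}(U,M)` -/
def Bop (Nh : ℕ) (g : ZMod Nh → ZMod Nh → (Fin 4 → ℝ) → ℝ) (U M : GridFun Nh)
    (i j : ZMod Nh) : ℝ :=
  (hstep Nh)⁻¹ *
    (M i j * gq (g i j) (Dh Nh U i j) 0 - M (i - 1) j * gq (g (i - 1) j) (Dh Nh U (i - 1) j) 0
     + M (i + 1) j * gq (g (i + 1) j) (Dh Nh U (i + 1) j) 1 - M i j * gq (g i j) (Dh Nh U i j) 1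
     + M i j * gq (g i j) (Dh Nh U i j) 2 - M i (j - 1) * gq (g i (j - 1)) (Dh Nh U i (j - 1)) 2
     + M i (j + 1) * gq (g i (j + 1)) (Dh Nh U i (j + 1)) 3 - M i j * gq (g i j) (Dh Nh U i j) 3)

/-!
Lasry–Lions duality. Pair the difference of the two Hamilton–Jacobi equations with `M - M'` and
the difference of the two Fokker–Planck equations with `U - U'`. The Laplacian terms cancel by
symmetry; the transport operator is the adjoint of the linearised Hamiltonian, so by convexity of
`g` the Hamiltonian and transport terms together are nonpositive; and after summation over time
the Caputo terms cancel, the backward L1 derivative being the adjoint of the forward one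
(`c̄ₙᵏ = c_{n+1}^{k+1}`). What is left is `∑ₙ (f_h[Mⁿ⁺¹] - f_h[M'ⁿ⁺¹], Mⁿ⁺¹ - M'ⁿ⁺¹)₂ ≤ 0`, so
strict monotonicity of `f_h` gives `M = M'`. With the measures equal, each Hamilton–Jacobi step
is an implicit equation for `Uⁿ` given the later values, uniquely solvable by the discrete maximum
principle that (G1) provides; backward induction from `Uᴺ = U'ᴺ` gives `U = U'`.
-/

lemma cB_eq_cF {α : ℝ} {N n k : ℕ} (hk : k ≠ N) : cB α N n k = cF α (k + 1) (n + 1) := by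
  rw [cB, cF, if_neg hk, if_neg n.succ_ne_zero]
  push_cast
  ring_nf

lemma DB_sub (α Δt : ℝ) (N n : ℕ) (w w' : ℕ → ℝ) :
    DB α Δt N w n - DB α Δt N w' n = DB α Δt N (fun m => w m - w' m) n := by
  simp only [DB, mul_sub, sum_sub_distrib]
  ring

lemma DF_sub (α Δt : ℝ) (n : ℕ) (w w' : ℕ → ℝ) :
    DF α Δt w n - DF α Δt w' n = DF α Δt (fun m => w m - w' m) n := by
  simp only [DF, mul_sub, sum_sub_distrib]
  ring

lemma DB_sub_DB_of_eq {α Δt : ℝ} {N n : ℕ} {w w' : ℕ → ℝ}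
    (h : ∀ k, n < k → k ≤ N → w k = w' k) :
    DB α Δt N w n - DB α Δt N w' n = (rhoA α Δt)⁻¹ * (w n - w' n) := by
  have hsum : ∑ k ∈ Icc (n + 1) N, cB α N n k * w k = ∑ k ∈ Icc (n + 1) N, cB α N n k * w' k :=
    sum_congr rfl fun k hk => by rw [h k (by grind) (mem_Icc.1 hk).2]
  rw [DB, DB, hsum]
  ring

theorem sum_DB_mul_eq_sum_DF_mul (α Δt : ℝ) {N : ℕ} {v r : ℕ → ℝ} (hv : v N = 0) (hr : r 0 = 0) :
    ∑ n ∈ range N, DB α Δt N v n * r (n + 1) = ∑ n ∈ range N, DF α Δt r (n + 1) * v n := by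
  have hB : ∀ n, ∑ k ∈ Icc (n + 1) N, cB α N n k * v k
      = ∑ k ∈ Ioo n N, cF α (k + 1) (n + 1) * v k := by
    intro n
    calc ∑ k ∈ Icc (n + 1) N, cB α N n k * v k = ∑ k ∈ Ioo n N, cB α N n k * v k := by
          refine (sum_subset (fun k hk => by grind) fun k hk hk' => ?_).symm
          obtain rfl : k = N := by grind
          rw [hv, mul_zero]
      _ = ∑ k ∈ Ioo n N, cF α (k + 1) (n + 1) * v k :=
          sum_congr rfl fun k hk => by rw [cB_eq_cF (mem_Ioo.1 hk).2.ne]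
  have hF : ∀ n, ∑ k ∈ range (n + 1), cF α (n + 1) k * r k
      = ∑ k ∈ range n, cF α (n + 1) (k + 1) * r (k + 1) := by
    intro n
    rw [sum_range_succ', hr, mul_zero, add_zero]
  have htriangle : ∑ n ∈ range N, (∑ k ∈ Icc (n + 1) N, cB α N n k * v k) * r (n + 1)
      = ∑ n ∈ range N, (∑ k ∈ range (n + 1), cF α (n + 1) k * r k) * v n := by
    simp only [hB, hF, sum_mul]
    rw [sum_comm' (t' := range N) (s' := range) fun n k => by simp only [mem_range, mem_Ioo]; omega]
    exact sum_congr rfl fun _ _ => sum_congr rfl fun _ _ => by ring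
  rw [← sub_eq_zero, ← sum_sub_distrib]
  calc ∑ n ∈ range N, (DB α Δt N v n * r (n + 1) - DF α Δt r (n + 1) * v n)
      = (rhoA α Δt)⁻¹ * (∑ n ∈ range N, (∑ k ∈ range (n + 1), cF α (n + 1) k * r k) * v n
        - ∑ n ∈ range N, (∑ k ∈ Icc (n + 1) N, cB α N n k * v k) * r (n + 1)) := by
        rw [← sum_sub_distrib, mul_sum]
        exact sum_congr rfl fun _ _ => by rw [DB, DF]; ring
    _ = 0 := by rw [htriangle, sub_self, mul_zero]

lemma rhoA_pos {α Δt : ℝ} (hα : α < 2) (hΔt : 0 < Δt) : 0 < rhoA α Δt :=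
  mul_pos (Real.Gamma_pos_of_pos (by linarith)) (Real.rpow_pos_of_pos hΔt α)

section Convex

variable {E : Type*} [NormedAddCommGroup E] [NormedSpace ℝ E] {f : E → ℝ}

theorem ConvexOn.fderiv_apply_sub_le (hf : ConvexOn ℝ Set.univ f) {x : E}
    (hx : DifferentiableAt ℝ f x) (y : E) : fderiv ℝ f x (y - x) ≤ f y - f x := by
  have hline := hf.comp_affineMap (AffineMap.lineMap (k := ℝ) x y)
  rw [Set.preimage_univ] at hline
  have hderiv : HasDerivAt (f ∘ AffineMap.lineMap (k := ℝ) x y) (fderiv ℝ f x (y - x)) 0 :=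
    hx.hasFDerivAt.comp_hasDerivAt_of_eq 0 AffineMap.hasDerivAt_lineMap
      (AffineMap.lineMap_apply_zero x y).symm
  simpa [slope_def_field] using
    hline.le_slope_of_hasDerivAt (Set.mem_univ 0) (Set.mem_univ 1) one_pos hderiv

theorem ConvexOn.sub_mul_sub_le (hf : ConvexOn ℝ Set.univ f) {p q : E}
    (hp : DifferentiableAt ℝ f p) (hq : DifferentiableAt ℝ f q) {m m' : ℝ} (hm : 0 ≤ m)
    (hm' : 0 ≤ m') :
    (f p - f q) * (m - m') ≤ m * fderiv ℝ f p (p - q) - m' * fderiv ℝ f q (p - q) := by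
  have hpq := hf.fderiv_apply_sub_le hp q
  have hqp := hf.fderiv_apply_sub_le hq p
  rw [← neg_sub, map_neg] at hpq
  nlinarith [mul_le_mul_of_nonneg_left hpq hm, mul_le_mul_of_nonneg_left hqp hm']

end Convex

section Torus

variable {G : Type*} [AddGroup G] [Fintype G]

theorem sum_sum_eq_of_sub_eq_divergence {X Y F H : G → G → ℝ} (c : ℝ) (a b : G)
    (h : ∀ i j, X i j - Y i j = c * (F i j - F (i - a) j + (H i j - H i (j - b)))) :
    ∑ i, ∑ j, X i j = ∑ i, ∑ j, Y i j := by
  have hF : ∑ i, ∑ j, F (i - a) j = ∑ i, ∑ j, F i j :=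
    Fintype.sum_equiv (Equiv.subRight a) _ _ fun _ => rfl
  have hH : ∑ i, ∑ j, H i (j - b) = ∑ i, ∑ j, H i j :=
    sum_congr rfl fun i _ => Fintype.sum_equiv (Equiv.subRight b) _ _ fun _ => rfl
  rw [← sub_eq_zero]
  simp only [← sum_sub_distrib, h]
  simp only [← mul_sum, sum_add_distrib, sum_sub_distrib, hF, hH]
  ring

end Torus

section Grid

variable {Nh : ℕ}

lemma hstep_pos (Nh : ℕ) [NeZero Nh] : 0 < hstep Nh :=
  inv_pos.2 (Nat.cast_pos.2 (Nat.pos_of_ne_zero (NeZero.ne Nh)))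

lemma lapl_sub (A B : GridFun Nh) (i j : ZMod Nh) :
    lapl Nh (A - B) i j = lapl Nh A i j - lapl Nh B i j := by
  simp only [lapl, Pi.sub_apply]
  ring

lemma Dh_sub (A B : GridFun Nh) (i j : ZMod Nh) :
    Dh Nh (A - B) i j = Dh Nh A i j - Dh Nh B i j := by
  ext k
  fin_cases k <;> simp [Dh, D1p, D2p] <;> ring

lemma fderiv_apply_eq_sum_gq (g : (Fin 4 → ℝ) → ℝ) (q v : Fin 4 → ℝ) :
    fderiv ℝ g q v = ∑ k, v k * gq g q k := by
  conv_lhs => rw [← univ_sum_single v]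
  simp only [map_sum, gq]
  refine sum_congr rfl fun k _ => ?_
  rw [← smul_eq_mul, ← map_smul, ← Pi.single_smul', smul_eq_mul, mul_one]

variable [NeZero Nh]

theorem sum_sum_lapl_mul (A B : GridFun Nh) :
    ∑ i, ∑ j, lapl Nh A i j * B i j = ∑ i, ∑ j, A i j * lapl Nh B i j :=
  sum_sum_eq_of_sub_eq_divergence (hstep Nh ^ 2)⁻¹ 1 1
    (F := fun i j => A (i + 1) j * B i j - A i j * B (i + 1) j)
    (H := fun i j => A i (j + 1) * B i j - A i j * B i (j + 1))
    fun i j => by simp only [lapl, sub_add_cancel]; ring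

theorem sum_sum_Bop_mul (g : ZMod Nh → ZMod Nh → (Fin 4 → ℝ) → ℝ) (U M W : GridFun Nh) :
    ∑ i, ∑ j, Bop Nh g U M i j * W i j
      = -∑ i, ∑ j, M i j * fderiv ℝ (g i j) (Dh Nh U i j) (Dh Nh W i j) := by
  set P : Fin 4 → GridFun Nh := fun k i j => M i j * gq (g i j) (Dh Nh U i j) k
  rw [sum_sum_eq_of_sub_eq_divergence (hstep Nh)⁻¹ 1 1
    (Y := fun i j => -(M i j * fderiv ℝ (g i j) (Dh Nh U i j) (Dh Nh W i j)))
    (F := fun i j => P 0 i j * W (i + 1) j + P 1 (i + 1) j * W i j)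
    (H := fun i j => P 2 i j * W i (j + 1) + P 3 i (j + 1) * W i j) fun i j => ?_]
  · simp only [sum_neg_distrib]
  have hDW : Dh Nh W i j = ![D1p Nh W i j, D1p Nh W (i - 1) j, D2p Nh W i j, D2p Nh W i (j - 1)] :=
    rfl
  rw [fderiv_apply_eq_sum_gq, Fin.sum_univ_four, hDW]
  simp only [P, Bop, D1p, D2p, Matrix.cons_val, sub_add_cancel]
  ring

end Grid

section Energy

variable {Nh : ℕ} [NeZero Nh] {g : ZMod Nh → ZMod Nh → (Fin 4 → ℝ) → ℝ}

theorem sum_sum_hamiltonian_sub_mul_le (hg : ∀ i j, Differentiable ℝ (g i j))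
    (hconv : ∀ i j, ConvexOn ℝ Set.univ (g i j)) {U U' M M' : GridFun Nh}
    (hM : ∀ i j, 0 ≤ M i j) (hM' : ∀ i j, 0 ≤ M' i j) :
    ∑ i, ∑ j, (g i j (Dh Nh U i j) - g i j (Dh Nh U' i j)) * (M i j - M' i j)
      ≤ ∑ i, ∑ j, (Bop Nh g U' M' i j - Bop Nh g U M i j) * (U - U') i j :=
  calc _ ≤ ∑ i, ∑ j, (M i j * fderiv ℝ (g i j) (Dh Nh U i j) (Dh Nh (U - U') i j)
          - M' i j * fderiv ℝ (g i j) (Dh Nh U' i j) (Dh Nh (U - U') i j)) :=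
        sum_le_sum fun i _ => sum_le_sum fun j _ => by
          rw [Dh_sub]
          exact (hconv i j).sub_mul_sub_le (hg i j _) (hg i j _) (hM i j) (hM' i j)
    _ = ∑ i, ∑ j, Bop Nh g U' M' i j * (U - U') i j
          - ∑ i, ∑ j, Bop Nh g U M i j * (U - U') i j := by
        rw [sum_sum_Bop_mul, sum_sum_Bop_mul]
        simp only [sum_sub_distrib]
        ring
    _ = _ := by simp only [← sum_sub_distrib, ← sub_mul]

/-- The Lasry–Lions duality estimate at one time step; `a, a'` and `b, b'` stand for the time
derivatives in the Hamilton–Jacobi and Fokker–Planck equations. -/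
theorem sum_sum_coupling_sub_mul_le (hg : ∀ i j, Differentiable ℝ (g i j))
    (hconv : ∀ i j, ConvexOn ℝ Set.univ (g i j)) {U U' M M' a a' b b' F F' : GridFun Nh}
    (hM : ∀ i j, 0 ≤ M i j) (hM' : ∀ i j, 0 ≤ M' i j)
    (hU : ∀ i j, a i j - lapl Nh U i j + g i j (Dh Nh U i j) = F i j)
    (hU' : ∀ i j, a' i j - lapl Nh U' i j + g i j (Dh Nh U' i j) = F' i j)
    (hFP : ∀ i j, b i j - lapl Nh M i j - Bop Nh g U M i j = 0)
    (hFP' : ∀ i j, b' i j - lapl Nh M' i j - Bop Nh g U' M' i j = 0) :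
    ∑ i, ∑ j, (F i j - F' i j) * (M i j - M' i j)
      ≤ ∑ i, ∑ j, ((a i j - a' i j) * (M i j - M' i j) - (b i j - b' i j) * (U i j - U' i j)) := by
  have hlapl := sum_sum_lapl_mul (U - U') (M - M')
  have hham := sum_sum_hamiltonian_sub_mul_le (U := U) (U' := U') hg hconv hM hM'
  have hsplit : ∀ i j, (F i j - F' i j) * (M i j - M' i j)
      = ((a i j - a' i j) * (M i j - M' i j) - (b i j - b' i j) * (U i j - U' i j))
        + ((U - U') i j * lapl Nh (M - M') i j - lapl Nh (U - U') i j * (M - M') i j)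
        + ((g i j (Dh Nh U i j) - g i j (Dh Nh U' i j)) * (M i j - M' i j)
          - (Bop Nh g U' M' i j - Bop Nh g U M i j) * (U - U') i j) := by
    intro i j
    simp only [lapl_sub, Pi.sub_apply]
    linear_combination
      (M i j - M' i j) * (hU' i j - hU i j) + (U i j - U' i j) * (hFP i j - hFP' i j)
  simp only [hsplit, sum_add_distrib, sum_sub_distrib] at hlapl hham ⊢
  linarith

end Energy

section Comparison

variable {Nh : ℕ}

theorem G1.apply_le_apply {f : (Fin 4 → ℝ) → ℝ} (hf : G1 f) {p q : Fin 4 → ℝ} (h₀ : p 0 ≤ q 0)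
    (h₁ : q 1 ≤ p 1) (h₂ : p 2 ≤ q 2) (h₃ : q 3 ≤ p 3) : f q ≤ f p := by
  obtain ⟨hf₀, hf₁, hf₂, hf₃⟩ := hf
  have anti : ∀ {k : Fin 4}, (∀ r, Antitone fun s => f (Function.update r k s)) →
      ∀ r {s}, s ≤ r k → f r ≤ f (Function.update r k s) := fun hk r _ hs => by
    simpa using hk r hs
  have mono : ∀ {k : Fin 4}, (∀ r, Monotone fun s => f (Function.update r k s)) →
      ∀ r {s}, r k ≤ s → f r ≤ f (Function.update r k s) := fun hk r _ hs => by
    simpa using hk r hs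
  set q₁ := Function.update q 0 (p 0)
  set q₂ := Function.update q₁ 1 (p 1)
  set q₃ := Function.update q₂ 2 (p 2)
  have hp : Function.update q₃ 3 (p 3) = p := by
    ext k
    fin_cases k <;> simp [q₁, q₂, q₃]
  calc f q ≤ f q₁ := anti hf₀ q h₀
    _ ≤ f q₂ := mono hf₁ q₁ (by simpa [q₁] using h₁)
    _ ≤ f q₃ := anti hf₂ q₂ (by simpa [q₁, q₂] using h₂)
    _ ≤ f p := hp ▸ mono hf₃ q₃ (by simpa [q₁, q₂, q₃] using h₃)

variable {A B : GridFun Nh} {i j : ZMod Nh}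

lemma lapl_le_lapl_of_isMax (hmax : ∀ a b, A a b - B a b ≤ A i j - B i j) :
    lapl Nh A i j ≤ lapl Nh B i j := by
  unfold lapl
  refine div_le_div_of_nonneg_right ?_ (sq_nonneg _)
  linarith [hmax (i + 1) j, hmax (i - 1) j, hmax i (j + 1), hmax i (j - 1)]

lemma apply_Dh_le_apply_Dh_of_isMax [NeZero Nh] {f : (Fin 4 → ℝ) → ℝ} (hf : G1 f)
    (hmax : ∀ a b, A a b - B a b ≤ A i j - B i j) : f (Dh Nh B i j) ≤ f (Dh Nh A i j) := by
  have hh := (hstep_pos Nh).le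
  refine hf.apply_le_apply ?_ ?_ ?_ ?_ <;>
    simp only [Dh, D1p, D2p, Matrix.cons_val, sub_add_cancel] <;>
    refine div_le_div_of_nonneg_right ?_ hh
  · linarith [hmax (i + 1) j]
  · linarith [hmax (i - 1) j]
  · linarith [hmax i (j + 1)]
  · linarith [hmax i (j - 1)]

theorem le_of_resolvent_le [NeZero Nh] {g : ZMod Nh → ZMod Nh → (Fin 4 → ℝ) → ℝ}
    (hg : ∀ i j, G1 (g i j)) {ρ : ℝ} (hρ : 0 < ρ)
    (h : ∀ i j, ρ⁻¹ * (A i j - B i j) - (lapl Nh A i j - lapl Nh B i j)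
      + (g i j (Dh Nh A i j) - g i j (Dh Nh B i j)) ≤ 0) :
    A ≤ B := by
  obtain ⟨⟨i, j⟩, hmax⟩ := Finite.exists_max fun p : ZMod Nh × ZMod Nh => A p.1 p.2 - B p.1 p.2
  have hmax' : ∀ a b, A a b - B a b ≤ A i j - B i j := fun a b => hmax (a, b)
  have hlapl := lapl_le_lapl_of_isMax hmax'
  have hham := apply_Dh_le_apply_Dh_of_isMax (hg i j) hmax'
  have hij : A i j - B i j ≤ 0 :=
    nonpos_of_mul_nonpos_right (a := ρ⁻¹) (by linarith [h i j]) (inv_pos.2 hρ)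
  intro a b
  linarith [hmax' a b]

theorem eq_of_resolvent_eq [NeZero Nh] {g : ZMod Nh → ZMod Nh → (Fin 4 → ℝ) → ℝ}
    (hg : ∀ i j, G1 (g i j)) {ρ : ℝ} (hρ : 0 < ρ)
    (h : ∀ i j, ρ⁻¹ * (A i j - B i j) - (lapl Nh A i j - lapl Nh B i j)
      + (g i j (Dh Nh A i j) - g i j (Dh Nh B i j)) = 0) :
    A = B :=
  le_antisymm (le_of_resolvent_le hg hρ fun i j => (h i j).le)
    (le_of_resolvent_le hg hρ fun i j => by linarith [h i j])

end Comparison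

structure IsSchemeSolution (α Δt : ℝ) (N Nh : ℕ) (g : ZMod Nh → ZMod Nh → (Fin 4 → ℝ) → ℝ)
    (fh : GridFun Nh → GridFun Nh) (U M : ℕ → GridFun Nh) : Prop where
  hjb : ∀ n < N, ∀ i j,
    DB α Δt N (fun m => U m i j) n - lapl Nh (U n) i j + g i j (Dh Nh (U n) i j)
      = fh (M (n + 1)) i j
  fokkerPlanck : ∀ n < N, ∀ i j,
    DF α Δt (fun m => M m i j) (n + 1) - lapl Nh (M (n + 1)) i j
      - Bop Nh g (U n) (M (n + 1)) i j = 0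

namespace IsSchemeSolution

variable {α Δt : ℝ} {N Nh : ℕ} [NeZero Nh] {g : ZMod Nh → ZMod Nh → (Fin 4 → ℝ) → ℝ}
  {fh : GridFun Nh → GridFun Nh} {U M U' M' : ℕ → GridFun Nh}

theorem inner2_le (hg : ∀ i j, Differentiable ℝ (g i j))
    (hconv : ∀ i j, ConvexOn ℝ Set.univ (g i j)) (hs : IsSchemeSolution α Δt N Nh g fh U M)
    (hs' : IsSchemeSolution α Δt N Nh g fh U' M') {n : ℕ} (hn : n < N)
    (hM : ∀ i j, 0 ≤ M (n + 1) i j) (hM' : ∀ i j, 0 ≤ M' (n + 1) i j) :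
    inner2 Nh (fh (M (n + 1)) - fh (M' (n + 1))) (M (n + 1) - M' (n + 1))
      ≤ hstep Nh ^ 2 * ∑ i, ∑ j,
        (DB α Δt N (fun m => U m i j - U' m i j) n * (M (n + 1) i j - M' (n + 1) i j)
          - DF α Δt (fun m => M m i j - M' m i j) (n + 1) * (U n i j - U' n i j)) := by
  refine mul_le_mul_of_nonneg_left ?_ (sq_nonneg _)
  simp only [Pi.sub_apply, ← DB_sub, ← DF_sub]
  exact sum_sum_coupling_sub_mul_le hg hconv hM hM' (hs.hjb n hn) (hs'.hjb n hn)
    (hs.fokkerPlanck n hn) (hs'.fokkerPlanck n hn)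

theorem measure_eq (hg : ∀ i j, Differentiable ℝ (g i j))
    (hconv : ∀ i j, ConvexOn ℝ Set.univ (g i j))
    (hmono : ∀ M M' : GridFun Nh, M ∈ Kh Nh → M' ∈ Kh Nh →
      0 ≤ inner2 Nh (fh M - fh M') (M - M'))
    (hstrict : ∀ M M' : GridFun Nh, M ∈ Kh Nh → M' ∈ Kh Nh →
      inner2 Nh (fh M - fh M') (M - M') = 0 → M = M')
    (hs : IsSchemeSolution α Δt N Nh g fh U M) (hs' : IsSchemeSolution α Δt N Nh g fh U' M')
    (hK : ∀ n ≤ N, M n ∈ Kh Nh) (hK' : ∀ n ≤ N, M' n ∈ Kh Nh) (hterm : U N = U' N)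
    (hinit : M 0 = M' 0) :
    ∀ n ≤ N, M n = M' n := by
  set Φ : ℕ → ℝ := fun n => inner2 Nh (fh (M (n + 1)) - fh (M' (n + 1))) (M (n + 1) - M' (n + 1))
  have hΦ_nonneg : ∀ n ∈ range N, 0 ≤ Φ n := fun n hn =>
    hmono _ _ (hK _ (mem_range.1 hn)) (hK' _ (mem_range.1 hn))
  have hΦ_le := fun (n : ℕ) (hn : n ∈ range N) => hs.inner2_le hg hconv hs' (mem_range.1 hn)
    (hK _ (mem_range.1 hn)).1 (hK' _ (mem_range.1 hn)).1
  have hΦ_sum : ∑ n ∈ range N, Φ n ≤ 0 := by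
    refine (sum_le_sum hΦ_le).trans_eq ?_
    rw [← mul_sum, sum_comm]
    refine mul_eq_zero_of_right _ (sum_eq_zero fun i _ => ?_)
    rw [sum_comm]
    refine sum_eq_zero fun j _ => ?_
    rw [sum_sub_distrib, sub_eq_zero]
    exact sum_DB_mul_eq_sum_DF_mul α Δt (v := fun m => U m i j - U' m i j)
      (r := fun m => M m i j - M' m i j) (by simp [hterm]) (by simp [hinit])
  have hΦ_zero := (sum_eq_zero_iff_of_nonneg hΦ_nonneg).1
    (le_antisymm hΦ_sum (sum_nonneg hΦ_nonneg))
  rintro (_ | n) hn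
  · exact hinit
  · exact hstrict _ _ (hK _ hn) (hK' _ hn) (hΦ_zero n (mem_range.2 hn))

theorem value_eq (hρ : 0 < rhoA α Δt) (hg : ∀ i j, G1 (g i j))
    (hs : IsSchemeSolution α Δt N Nh g fh U M) (hs' : IsSchemeSolution α Δt N Nh g fh U' M')
    (hM : ∀ n ≤ N, M n = M' n) (hterm : U N = U' N) :
    ∀ n ≤ N, U n = U' n := by
  suffices h : ∀ n ≤ N, ∀ k, n ≤ k → k ≤ N → U k = U' k from fun n hn => h n hn n le_rfl hn
  intro n hn
  induction hn using Nat.decreasingInduction with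
  | self => exact fun k hk hkN => le_antisymm hkN hk ▸ hterm
  | of_succ n hn ih =>
    have hn_eq : U n = U' n := eq_of_resolvent_eq hg hρ fun i j => by
      have hDB := DB_sub_DB_of_eq (α := α) (Δt := Δt) (w := fun m => U m i j)
        (w' := fun m => U' m i j) fun k hk hkN => by rw [ih k hk hkN]
      have hjb := hs.hjb n hn i j
      rw [hM (n + 1) hn] at hjb
      linarith [hs'.hjb n hn i j]
    intro k hk hkN
    rcases hk.eq_or_lt with rfl | hk
    · exact hn_eq
    · exact ih k hk hkN

end IsSchemeSolution

/-- Uniqueness for the discrete time-fractional MFG scheme. -/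
theorem MFG_uniqueness (α Δt : ℝ) (hα : α ∈ Set.Ioo (0 : ℝ) 1) (hΔt : 0 < Δt)
    (N Nh : ℕ) [NeZero Nh]
    (g : ZMod Nh → ZMod Nh → (Fin 4 → ℝ) → ℝ)
    (hgC1 : ∀ i j, ContDiff ℝ 1 (g i j)) (hg1 : ∀ i j, G1 (g i j))
    (hg4 : ∀ i j, ConvexOn ℝ Set.univ (g i j))
    (fh : GridFun Nh → GridFun Nh)
    (hmono : ∀ M M' : GridFun Nh, M ∈ Kh Nh → M' ∈ Kh Nh →
      0 ≤ inner2 Nh (fh M - fh M') (M - M'))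
    (hstrict : ∀ M M' : GridFun Nh, M ∈ Kh Nh → M' ∈ Kh Nh →
      inner2 Nh (fh M - fh M') (M - M') = 0 → M = M')
    (U M U' M' : ℕ → GridFun Nh)
    (hKh : ∀ n ≤ N, M n ∈ Kh Nh) (hKh' : ∀ n ≤ N, M' n ∈ Kh Nh)
    (hHJB : ∀ n < N, ∀ i j,
      DB α Δt N (fun m => U m i j) n - lapl Nh (U n) i j
        + g i j (Dh Nh (U n) i j) = fh (M (n + 1)) i j)
    (hFP : ∀ n < N, ∀ i j,
      DF α Δt (fun m => M m i j) (n + 1) - lapl Nh (M (n + 1)) i j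
        - Bop Nh g (U n) (M (n + 1)) i j = 0)
    (hHJB' : ∀ n < N, ∀ i j,
      DB α Δt N (fun m => U' m i j) n - lapl Nh (U' n) i j
        + g i j (Dh Nh (U' n) i j) = fh (M' (n + 1)) i j)
    (hFP' : ∀ n < N, ∀ i j,
      DF α Δt (fun m => M' m i j) (n + 1) - lapl Nh (M' (n + 1)) i j
        - Bop Nh g (U' n) (M' (n + 1)) i j = 0)
    (hterm : U N = U' N) (hinit : M 0 = M' 0) :
    ∀ n ≤ N, U n = U' n ∧ M n = M' n := by
  have hρ : 0 < rhoA α Δt := rhoA_pos (by linarith [hα.2]) hΔt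
  have hdiff : ∀ i j, Differentiable ℝ (g i j) := fun i j => (hgC1 i j).differentiable one_ne_zero
  have hs : IsSchemeSolution α Δt N Nh g fh U M := ⟨hHJB, hFP⟩
  have hs' : IsSchemeSolution α Δt N Nh g fh U' M' := ⟨hHJB', hFP'⟩
  have hM := hs.measure_eq hdiff hg4 hmono hstrict hs' hKh hKh' hterm hinit
  exact fun n hn => ⟨hs.value_eq hρ hg1 hs' hM hterm n hn, hM n hn⟩
end
end

section
/- Positivity and discrete mass conservation for the discrete time-fractional Fokker–Planck scheme: Under the hypotheses ensuring existence (g C¹ in q satisfying (G1), given grid functions (Uⁿ)_{n=0}^{N−1}, Δt sufficiently small), if the initial datum satisfies M⁰_{i,j} ≥ 0 for all (i,j) and (M⁰, 1̄)₂ = 1, then the solution (Mⁿ)_{n=0}^N of the scheme D^α_{Δt}M^{n+1}_{i,j} − (Δ_hM^{n+1})_{i,j} − B_{i,j}(Uⁿ, M^{n+1}) = 0 (n = 0,…,N−1) satisfies Mⁿ_{i,j} ≥ 0 for all (i,j) and (Mⁿ, 1̄)₂ = 1 for every n = 0,…,N. -/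
/-! The L1 weights `c_k^{n+1}` (`k ≤ n`) are nonnegative by concavity of `t ↦ t^(1-α)` and
telescope to `1`, so the history term of the scheme is a convex combination of the past.
Positivity is a discrete minimum principle: at a minimum point of `M^{n+1}` the Laplacian is
nonnegative and, by the sign conditions (G1), the upwind operator `B` is bounded below by
`(8C/h) · min M^{n+1}`, where `C` bounds the partial derivatives of `g` along the `Uⁿ`; once
`ρ_α · 8C/h < 1` a negative minimum is impossible. Mass conservation comes from summing the
scheme over the torus: `Δ_h` and `B` are discrete divergences, so the discrete Caputo derivative
of the total mass vanishes, and since the weights sum to `1` the mass stays `1`. -/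

open Real Finset

noncomputable section

lemma cF_succ_nonneg {α : ℝ} (hα₀ : 0 ≤ α) (hα₁ : α ≤ 1) {n k : ℕ} (hk : k ≤ n) :
    0 ≤ cF α (n + 1) k := by
  have hp : 0 ≤ 1 - α := by linarith
  rcases Nat.eq_zero_or_pos k with rfl | hk₀
  · simp only [cF, if_true]
    push_cast
    rw [add_sub_cancel_right, sub_nonneg]
    exact Real.rpow_le_rpow n.cast_nonneg (by linarith) hp
  · have hkn : (k : ℝ) ≤ n := by exact_mod_cast hk
    set b : ℝ := (n : ℝ) + 1 - k
    have hmid := (Real.concaveOn_rpow hp (by linarith)).2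
      (show b - 1 ∈ Set.Ici (0 : ℝ) by simp only [Set.mem_Ici, b]; linarith)
      (show b + 1 ∈ Set.Ici (0 : ℝ) by simp only [Set.mem_Ici, b]; linarith)
      (by norm_num : (0 : ℝ) ≤ 1 / 2) (by norm_num : (0 : ℝ) ≤ 1 / 2) (by norm_num)
    simp only [smul_eq_mul] at hmid
    rw [show 1 / 2 * (b - 1) + 1 / 2 * (b + 1) = b by ring] at hmid
    simp only [cF, hk₀.ne', if_false]
    push_cast
    rw [show (n : ℝ) + 1 + 1 - k = b + 1 by ring, show (n : ℝ) + 1 - 1 - k = b - 1 by ring]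
    linarith

lemma sum_range_cF_succ {α : ℝ} (hα : α ≠ 1) (n : ℕ) :
    ∑ k ∈ range (n + 1), cF α (n + 1) k = 1 := by
  have hp : 1 - α ≠ 0 := sub_ne_zero.mpr hα.symm
  let G : ℕ → ℝ := fun k => ((n : ℝ) + 1 - k) ^ (1 - α) - ((n : ℝ) + 2 - k) ^ (1 - α)
  have htel : ∀ k ∈ range n, cF α (n + 1) (k + 1) = G (k + 1) - G (k + 2) := by
    intro k _
    simp only [cF, Nat.succ_ne_zero, if_false, G]
    push_cast
    ring_nf
  rw [sum_range_succ', sum_congr rfl htel, sum_range_sub' (fun k => G (k + 1))]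
  simp only [cF, if_true, G]
  push_cast
  rw [sub_self, show (n : ℝ) + 2 - (n + 1) = 1 by ring, Real.zero_rpow hp, Real.one_rpow]
  ring_nf

lemma DF_succ_of_forall_eq {α Δt c : ℝ} (hα : α ≠ 1) {w : ℕ → ℝ} {n : ℕ}
    (hw : ∀ k ≤ n, w k = c) : DF α Δt w (n + 1) = (rhoA α Δt)⁻¹ * (w (n + 1) - c) := by
  have hsum : ∑ k ∈ range (n + 1), cF α (n + 1) k * w k = c := by
    rw [sum_congr rfl fun k hk => by rw [hw k (Nat.lt_succ_iff.mp (mem_range.mp hk))],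
      ← sum_mul, sum_range_cF_succ hα, one_mul]
  rw [DF, hsum]

lemma DF_inner2 {Nh : ℕ} [NeZero Nh] (α Δt : ℝ) (M : ℕ → GridFun Nh) (V : GridFun Nh)
    (n : ℕ) : DF α Δt (fun m => inner2 Nh (M m) V) n
      = inner2 Nh (fun i j => DF α Δt (fun m => M m i j) n) V := by
  simp only [DF, inner2, mul_sum, sum_mul, mul_sub, sub_mul, sum_sub_distrib]
  congr 1
  · refine sum_congr rfl fun i _ => sum_congr rfl fun j _ => ?_
    ring
  · rw [sum_comm]
    refine sum_congr rfl fun i _ => ?_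
    rw [sum_comm]
    refine sum_congr rfl fun j _ => sum_congr rfl fun k _ => ?_
    ring

lemma exists_rhoA_mul_lt_one {α : ℝ} (hα : 0 < α) (K : ℝ) :
    ∃ δ > 0, ∀ Δt : ℝ, 0 < Δt → Δt < δ → rhoA α Δt * K < 1 := by
  have hlim : Filter.Tendsto (fun t => rhoA α t * K) (nhds 0) (nhds 0) := by
    have := ((Real.continuousAt_rpow_const 0 α (Or.inr hα.le)).const_mul
      (Real.Gamma (2 - α))).mul_const K
    simpa [rhoA, Real.zero_rpow hα.ne'] using this.tendsto
  obtain ⟨δ, hδ, hsmall⟩ := Metric.eventually_nhds_iff.mp (hlim.eventually (gt_mem_nhds one_pos))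
  refine ⟨δ, hδ, fun Δt hΔt hΔtδ => hsmall ?_⟩
  rwa [Real.dist_0_eq_abs, abs_of_pos hΔt]

lemma sum_sum_comp_add_sub {G : Type*} [AddCommGroup G] [Fintype G] (F : G → G → ℝ) (c d : G) :
    ∑ i, ∑ j, (F (i + c) (j + d) - F i j) = 0 := by
  simp only [sum_sub_distrib, sub_eq_zero]
  exact Fintype.sum_equiv (Equiv.addRight c) _ _ fun i =>
    Fintype.sum_equiv (Equiv.addRight d) _ _ fun j => rfl

lemma sum_sum_lapl {Nh : ℕ} [NeZero Nh] (M : GridFun Nh) :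
    ∑ i, ∑ j, lapl Nh M i j = 0 := by
  -- the `+ 0` shifts put every bracket in the shape of `sum_sum_comp_add_sub`
  have hdiff : ∀ i j, lapl Nh M i j = ((M (i + 1) (j + 0) - M i j) + (M (i + -1) (j + 0) - M i j)
      + (M (i + 0) (j + 1) - M i j) + (M (i + 0) (j + -1) - M i j)) / hstep Nh ^ 2 := by
    intro i j
    simp only [lapl, add_zero, ← sub_eq_add_neg]
    ring
  simp only [hdiff, ← sum_div, sum_add_distrib]
  simp only [sum_sum_comp_add_sub]
  simp

lemma sum_sum_Bop {Nh : ℕ} [NeZero Nh] (g : ZMod Nh → ZMod Nh → (Fin 4 → ℝ) → ℝ)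
    (U M : GridFun Nh) : ∑ i, ∑ j, Bop Nh g U M i j = 0 := by
  let flux : Fin 4 → GridFun Nh := fun k i j => M i j * gq (g i j) (Dh Nh U i j) k
  have hdiff : ∀ i j, Bop Nh g U M i j = (hstep Nh)⁻¹ *
      (-(flux 0 (i + -1) (j + 0) - flux 0 i j) + (flux 1 (i + 1) (j + 0) - flux 1 i j)
        + -(flux 2 (i + 0) (j + -1) - flux 2 i j) + (flux 3 (i + 0) (j + 1) - flux 3 i j)) := by
    intro i j
    simp only [Bop, flux, add_zero, ← sub_eq_add_neg]
    ring
  simp only [hdiff, ← mul_sum, sum_add_distrib, sum_neg_distrib]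
  simp only [sum_sum_comp_add_sub]
  simp

lemma gq_eq_deriv_update {g : (Fin 4 → ℝ) → ℝ} {q : Fin 4 → ℝ} (hg : DifferentiableAt ℝ g q)
    (k : Fin 4) : gq g q k = deriv (fun s => g (Function.update q k s)) (q k) := by
  have hg' : HasFDerivAt g (fderiv ℝ g q) (Function.update q k (q k)) := by
    rw [Function.update_eq_self]
    exact hg.hasFDerivAt
  rw [← Function.comp_def, (hg'.comp (q k) (hasFDerivAt_update q (q k))).hasDerivAt.deriv, gq,
    ContinuousLinearMap.comp_apply]
  congr 1
  ext i
  rcases eq_or_ne i k with rfl | hik <;> simp [*]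

lemma gq_nonneg_of_monotone {g : (Fin 4 → ℝ) → ℝ} {q : Fin 4 → ℝ} {k : Fin 4}
    (hmono : Monotone fun s => g (Function.update q k s)) : 0 ≤ gq g q k := by
  by_cases hg : DifferentiableAt ℝ g q
  · rw [gq_eq_deriv_update hg]
    exact hmono.deriv_nonneg
  · simp [gq, fderiv_zero_of_not_differentiableAt hg]

lemma gq_nonpos_of_antitone {g : (Fin 4 → ℝ) → ℝ} {q : Fin 4 → ℝ} {k : Fin 4}
    (hanti : Antitone fun s => g (Function.update q k s)) : gq g q k ≤ 0 := by
  by_cases hg : DifferentiableAt ℝ g q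
  · rw [gq_eq_deriv_update hg]
    exact hanti.deriv_nonpos
  · simp [gq, fderiv_zero_of_not_differentiableAt hg]

lemma lapl_nonneg_of_isMin {Nh : ℕ} {M : GridFun Nh} {i₀ j₀ : ZMod Nh}
    (hmin : ∀ i j, M i₀ j₀ ≤ M i j) : 0 ≤ lapl Nh M i₀ j₀ := by
  have := hmin (i₀ + 1) j₀
  have := hmin (i₀ - 1) j₀
  have := hmin i₀ (j₀ + 1)
  have := hmin i₀ (j₀ - 1)
  exact div_nonneg (by linarith) (sq_nonneg _)

lemma mul_le_Bop_of_isMin {Nh : ℕ} {g : ZMod Nh → ZMod Nh → (Fin 4 → ℝ) → ℝ}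
    (hg : ∀ i j, G1 (g i j)) {U M : GridFun Nh} {C : ℝ}
    (hC : ∀ i j k, |gq (g i j) (Dh Nh U i j) k| ≤ C) {i₀ j₀ : ZMod Nh}
    (hmin : ∀ i j, M i₀ j₀ ≤ M i j) (hneg : M i₀ j₀ ≤ 0) :
    8 * C / hstep Nh * M i₀ j₀ ≤ Bop Nh g U M i₀ j₀ := by
  have hb := gq_nonpos_of_antitone ((hg (i₀ - 1) j₀).1 (Dh Nh U (i₀ - 1) j₀))
  have hc := gq_nonneg_of_monotone ((hg (i₀ + 1) j₀).2.1 (Dh Nh U (i₀ + 1) j₀))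
  have hf := gq_nonpos_of_antitone ((hg i₀ (j₀ - 1)).2.2.1 (Dh Nh U i₀ (j₀ - 1)))
  have hg' := gq_nonneg_of_monotone ((hg i₀ (j₀ + 1)).2.2.2 (Dh Nh U i₀ (j₀ + 1)))
  have hbound : ∀ i j k, -C ≤ gq (g i j) (Dh Nh U i j) k ∧ gq (g i j) (Dh Nh U i j) k ≤ C :=
    fun i j k => abs_le.mp (hC i j k)
  have hsum_le : gq (g i₀ j₀) (Dh Nh U i₀ j₀) 0 - gq (g (i₀ - 1) j₀) (Dh Nh U (i₀ - 1) j₀) 0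
      + gq (g (i₀ + 1) j₀) (Dh Nh U (i₀ + 1) j₀) 1 - gq (g i₀ j₀) (Dh Nh U i₀ j₀) 1
      + gq (g i₀ j₀) (Dh Nh U i₀ j₀) 2 - gq (g i₀ (j₀ - 1)) (Dh Nh U i₀ (j₀ - 1)) 2
      + gq (g i₀ (j₀ + 1)) (Dh Nh U i₀ (j₀ + 1)) 3 - gq (g i₀ j₀) (Dh Nh U i₀ j₀) 3 ≤ 8 * C := by
    linarith [(hbound i₀ j₀ 0).2, (hbound (i₀ - 1) j₀ 0).1, (hbound (i₀ + 1) j₀ 1).2,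
      (hbound i₀ j₀ 1).1, (hbound i₀ j₀ 2).2, (hbound i₀ (j₀ - 1) 2).1,
      (hbound i₀ (j₀ + 1) 3).2, (hbound i₀ j₀ 3).1]
  rw [Bop, div_mul_eq_mul_div, div_eq_inv_mul]
  refine mul_le_mul_of_nonneg_left ?_ (inv_nonneg.mpr (inv_nonneg.mpr (Nat.cast_nonneg Nh)))
  nlinarith [mul_nonneg (sub_nonneg.mpr (hmin (i₀ - 1) j₀)) (neg_nonneg.mpr hb),
    mul_nonneg (sub_nonneg.mpr (hmin (i₀ + 1) j₀)) hc,
    mul_nonneg (sub_nonneg.mpr (hmin i₀ (j₀ - 1))) (neg_nonneg.mpr hf),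
    mul_nonneg (sub_nonneg.mpr (hmin i₀ (j₀ + 1))) hg',
    mul_nonneg_of_nonpos_of_nonpos hneg (sub_nonpos.mpr hsum_le)]

lemma nonneg_of_eq_add_mul_lapl_add_Bop {Nh : ℕ} [NeZero Nh]
    {g : ZMod Nh → ZMod Nh → (Fin 4 → ℝ) → ℝ} (hg : ∀ i j, G1 (g i j)) {U M S : GridFun Nh}
    {C ρ : ℝ} (hC : ∀ i j k, |gq (g i j) (Dh Nh U i j) k| ≤ C) (hρ : 0 ≤ ρ)
    (hsmall : ρ * (8 * C / hstep Nh) < 1) (hS : ∀ i j, 0 ≤ S i j)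
    (hM : ∀ i j, M i j = S i j + ρ * (lapl Nh M i j + Bop Nh g U M i j)) (i j : ZMod Nh) :
    0 ≤ M i j := by
  obtain ⟨⟨i₀, j₀⟩, hmin⟩ := Finite.exists_min fun p : ZMod Nh × ZMod Nh => M p.1 p.2
  replace hmin : ∀ i j, M i₀ j₀ ≤ M i j := fun i j => hmin (i, j)
  suffices h₀ : 0 ≤ M i₀ j₀ from h₀.trans (hmin i j)
  by_contra! hneg
  have hL := lapl_nonneg_of_isMin hmin
  have hB := mul_le_Bop_of_isMin hg hC hmin hneg.le
  have hρB := mul_le_mul_of_nonneg_left (add_le_add hL hB) hρ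
  nlinarith [hM i₀ j₀, hS i₀ j₀]

section SchemeStep

variable {α Δt : ℝ} {Nh : ℕ} [NeZero Nh] {g : ZMod Nh → ZMod Nh → (Fin 4 → ℝ) → ℝ}
  {U : GridFun Nh} {M : ℕ → GridFun Nh} {n : ℕ}

lemma nonneg_succ_of_scheme (hα₀ : 0 ≤ α) (hα₁ : α ≤ 1) (hg : ∀ i j, G1 (g i j)) {C : ℝ}
    (hC : ∀ i j k, |gq (g i j) (Dh Nh U i j) k| ≤ C) (hρ : 0 < rhoA α Δt)
    (hsmall : rhoA α Δt * (8 * C / hstep Nh) < 1) (hprev : ∀ k ≤ n, ∀ i j, 0 ≤ M k i j)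
    (hscheme : ∀ i j, DF α Δt (fun m => M m i j) (n + 1) - lapl Nh (M (n + 1)) i j
      - Bop Nh g U (M (n + 1)) i j = 0) (i j : ZMod Nh) : 0 ≤ M (n + 1) i j := by
  refine nonneg_of_eq_add_mul_lapl_add_Bop hg hC hρ.le hsmall
    (S := fun i j => ∑ k ∈ range (n + 1), cF α (n + 1) k * M k i j)
    (fun i j => sum_nonneg fun k hk => ?_) (fun i j => ?_) i j
  · have hkn := Nat.lt_succ_iff.mp (mem_range.mp hk)
    exact mul_nonneg (cF_succ_nonneg hα₀ hα₁ hkn) (hprev k hkn i j)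
  · have := hscheme i j
    rw [DF] at this
    field_simp at this
    linarith

lemma mass_succ_of_scheme (hα : α ≠ 1) (hρ : rhoA α Δt ≠ 0)
    (hprev : ∀ k ≤ n, inner2 Nh (M k) (fun _ _ => 1) = 1)
    (hscheme : ∀ i j, DF α Δt (fun m => M m i j) (n + 1) - lapl Nh (M (n + 1)) i j
      - Bop Nh g U (M (n + 1)) i j = 0) : inner2 Nh (M (n + 1)) (fun _ _ => 1) = 1 := by
  have hDF : DF α Δt (fun m => inner2 Nh (M m) fun _ _ => 1) (n + 1) = 0 := by
    have hsplit : ∀ i j, DF α Δt (fun m => M m i j) (n + 1)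
        = lapl Nh (M (n + 1)) i j + Bop Nh g U (M (n + 1)) i j := fun i j => by
      linarith [hscheme i j]
    rw [DF_inner2]
    simp only [inner2, mul_one, hsplit, sum_add_distrib, sum_sum_lapl, sum_sum_Bop, add_zero,
      mul_zero]
  rw [DF_succ_of_forall_eq hα hprev] at hDF
  linarith [(mul_eq_zero.mp hDF).resolve_left (inv_ne_zero hρ)]

end SchemeStep

theorem FP_positivity_mass_conservation_general (α : ℝ) (hα : α ∈ Set.Ioo (0 : ℝ) 1)
    (N Nh : ℕ) [NeZero Nh]
    (g : ZMod Nh → ZMod Nh → (Fin 4 → ℝ) → ℝ)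
    (hg1 : ∀ i j, G1 (g i j))
    (U : ℕ → GridFun Nh) :
    ∃ δ > 0, ∀ Δt : ℝ, 0 < Δt → Δt < δ →
      ∀ M : ℕ → GridFun Nh,
        (∀ i j, 0 ≤ M 0 i j) → inner2 Nh (M 0) (fun _ _ => 1) = 1 →
        (∀ n < N, ∀ i j,
          DF α Δt (fun m => M m i j) (n + 1) - lapl Nh (M (n + 1)) i j
            - Bop Nh g (U n) (M (n + 1)) i j = 0) →
        ∀ n ≤ N, (∀ i j, 0 ≤ M n i j) ∧ inner2 Nh (M n) (fun _ _ => 1) = 1 := by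
  obtain ⟨C, hC⟩ := Finite.exists_le fun p : Fin N × ZMod Nh × ZMod Nh × Fin 4 =>
    |gq (g p.2.1 p.2.2.1) (Dh Nh (U p.1) p.2.1 p.2.2.1) p.2.2.2|
  obtain ⟨δ, hδ, hsmall⟩ := exists_rhoA_mul_lt_one hα.1 (8 * C / hstep Nh)
  refine ⟨δ, hδ, fun Δt hΔt hΔtδ M hM₀ hmass₀ hscheme n => ?_⟩
  have hρ : 0 < rhoA α Δt := rhoA_pos (by linarith [hα.2]) hΔt
  induction n using Nat.strong_induction_on with
  | _ n ih =>
    intro hn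
    cases n with
    | zero => exact ⟨hM₀, hmass₀⟩
    | succ n =>
      have hprev : ∀ k ≤ n, (∀ i j, 0 ≤ M k i j) ∧ inner2 Nh (M k) (fun _ _ => 1) = 1 :=
        fun k hk => ih k (by omega) (by omega)
      have hnext := hscheme n (by omega)
      exact ⟨nonneg_succ_of_scheme hα.1.le hα.2.le hg1 (fun i j k => hC (⟨n, by omega⟩, i, j, k))
          hρ (hsmall Δt hΔt hΔtδ) (fun k hk => (hprev k hk).1) hnext,
        mass_succ_of_scheme hα.2.ne hρ.ne' (fun k hk => (hprev k hk).2) hnext⟩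

/-- Positivity and discrete mass conservation for the discrete time-fractional
Fokker-Planck scheme, for `Δt` sufficiently small. -/
theorem FP_positivity_mass_conservation (α : ℝ) (hα : α ∈ Set.Ioo (0 : ℝ) 1)
    (N Nh : ℕ) [NeZero Nh]
    (g : ZMod Nh → ZMod Nh → (Fin 4 → ℝ) → ℝ)
    (hgC1 : ∀ i j, ContDiff ℝ 1 (g i j)) (hg1 : ∀ i j, G1 (g i j))
    (U : ℕ → GridFun Nh) :
    ∃ δ > 0, ∀ Δt : ℝ, 0 < Δt → Δt < δ →
      ∀ M : ℕ → GridFun Nh,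
        (∀ i j, 0 ≤ M 0 i j) → inner2 Nh (M 0) (fun _ _ => 1) = 1 →
        (∀ n < N, ∀ i j,
          DF α Δt (fun m => M m i j) (n + 1) - lapl Nh (M (n + 1)) i j
            - Bop Nh g (U n) (M (n + 1)) i j = 0) →
        ∀ n ≤ N, (∀ i j, 0 ≤ M n i j) ∧ inner2 Nh (M n) (fun _ _ => 1) = 1 :=
  FP_positivity_mass_conservation_general α hα N Nh g hg1 U
end
end

section
/- Existence and uniqueness for the stationary discrete Hamilton–Jacobi equation: Let g be a numerical Hamiltonian, continuous in q and satisfying (G1) (nonincreasing in q₁ and q₃, nondecreasing in q₂ and q₄). Then for every δ > 0 and every grid function V, there exists a unique grid function U such that δ·U_{i,j} − (Δ_hU)_{i,j} + g(x_{i,j}, [D_hU]_{i,j}) = V_{i,j} for all grid indices (i,j). -/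
open Real Finset

noncomputable section

/-!
The operator `F U = δ U - Δ_h U + g(x, D_h U)` is degenerate elliptic: by (G1), raising `U` away
from `(i, j)` while keeping `U i j` fixed can only lower `F U i j`; moreover
`F (U + t) = F U + δ t`. Evaluating at a maximum point of `U - W` gives the comparison principle
`F U ≤ F W → U ≤ W`, hence uniqueness. Existence is Perron's method: the subsolutions lying above
a constant subsolution form a compact set (they lie below a constant supersolution), and a
subsolution maximising `∑ U` is a solution, since wherever it is strict, continuity of `g` lets
it be raised a little at that single point.
-/

open Topology

/-- Degenerate ellipticity of a finite difference scheme, in the sense of Oberman. -/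
def DegenerateElliptic {ι : Type*} (F : (ι → ℝ) → ι → ℝ) : Prop :=
  ∀ u v i, u ≤ v → u i = v i → F v i ≤ F u i

namespace DegenerateElliptic

variable {ι : Type*} {F : (ι → ℝ) → ι → ℝ} {δ : ℝ}

theorem le_of_apply_le [Finite ι] (hF : DegenerateElliptic F) (hδ : 0 < δ)
    (hshift : ∀ u (t : ℝ), F (u + fun _ => t) = F u + fun _ => δ * t)
    {u v : ι → ℝ} (h : F u ≤ F v) : u ≤ v := by
  by_contra hne
  obtain ⟨i, hi⟩ : ∃ i, v i < u i := by simpa [Pi.le_def] using hne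
  have : Nonempty ι := ⟨i⟩
  obtain ⟨k, hk⟩ := Finite.exists_max (u - v)
  set t := u k - v k
  have ht : 0 < t := by have := hk i; simp only [Pi.sub_apply] at this; linarith
  have hle : u ≤ v + fun _ => t := fun j => by
    have := hk j; simp only [Pi.sub_apply, Pi.add_apply] at this ⊢; linarith
  have hFk : F v k + δ * t ≤ F u k := by
    simpa only [hshift, Pi.add_apply] using hF u _ k hle (by simp [t])
  linarith [h k, mul_pos hδ ht]

theorem exists_add_single_le [DecidableEq ι] (hF : DegenerateElliptic F) (hFc : Continuous F)
    {u V : ι → ℝ} (hu : F u ≤ V) {i : ι} (hi : F u i < V i) :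
    ∃ ε > 0, F (u + Pi.single i ε) ≤ V := by
  have hcont : Continuous fun ε : ℝ => F (u + Pi.single i ε) i :=
    (continuous_apply i).comp
      (hFc.comp (continuous_const.add (continuous_single (A := fun _ : ι => ℝ) i)))
  have hev : ∀ᶠ ε in 𝓝[>] 0, F (u + Pi.single i ε) i < V i :=
    ((hcont.tendsto' 0 (F u i) (by simp)).eventually (gt_mem_nhds hi)).filter_mono
      nhdsWithin_le_nhds
  obtain ⟨ε, hε, hεpos⟩ := (hev.and self_mem_nhdsWithin).exists
  refine ⟨ε, hεpos, fun j => ?_⟩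
  rcases eq_or_ne j i with rfl | hj
  · exact hε.le
  · have hle : u ≤ u + Pi.single i ε := le_add_of_nonneg_right (Pi.single_nonneg.2 hεpos.le)
    exact (hF u _ j hle (by simp [hj])).trans (hu j)

theorem exists_apply_eq [Fintype ι] (hF : DegenerateElliptic F) (hFc : Continuous F)
    (hδ : 0 < δ) (hshift : ∀ u (t : ℝ), F (u + fun _ => t) = F u + fun _ => δ * t)
    (V : ι → ℝ) : ∃ u, F u = V := by
  classical
  set R := ‖F 0 - V‖ / δ
  have hconst (t : ℝ) : F (fun _ => t) = F 0 + fun _ => δ * t := by simpa using hshift 0 t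
  have hdev (i : ι) : |F 0 i - V i| ≤ δ * R := by
    rw [mul_div_cancel₀ _ hδ.ne']
    exact norm_le_pi_norm (F 0 - V) i
  have hsub : F (fun _ => -R) ≤ V := fun i => by
    rw [hconst]; simp only [Pi.add_apply]; linarith [abs_le.1 (hdev i)]
  have hsuper : V ≤ F (fun _ => R) := fun i => by
    rw [hconst]; simp only [Pi.add_apply]; linarith [abs_le.1 (hdev i)]
  set S := {u | F u ≤ V ∧ (fun _ => -R) ≤ u}
  have hS : IsCompact S :=
    isCompact_Icc.of_isClosed_subset
      ((isClosed_le hFc continuous_const).inter (isClosed_le continuous_const continuous_id))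
      fun u hu => ⟨hu.2, hF.le_of_apply_le hδ hshift (hu.1.trans hsuper)⟩
  obtain ⟨u, ⟨hu, hRu⟩, hmax⟩ := hS.exists_isMaxOn ⟨_, hsub, le_rfl⟩
    (continuous_finsetSum univ fun i _ => continuous_apply i).continuousOn
  refine ⟨u, le_antisymm hu fun i => not_lt.1 fun hi => ?_⟩
  obtain ⟨ε, hε, hεV⟩ := hF.exists_add_single_le hFc hu hi
  have hle : ∑ j, (u + Pi.single i ε : ι → ℝ) j ≤ ∑ j, u j :=
    hmax ⟨hεV, hRu.trans (le_add_of_nonneg_right (Pi.single_nonneg.2 hε.le))⟩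
  simp only [Pi.add_apply, sum_add_distrib, sum_pi_single', mem_univ, if_true] at hle
  linarith

theorem existsUnique_apply_eq [Fintype ι] (hF : DegenerateElliptic F) (hFc : Continuous F)
    (hδ : 0 < δ) (hshift : ∀ u (t : ℝ), F (u + fun _ => t) = F u + fun _ => δ * t)
    (V : ι → ℝ) : ∃! u, F u = V := by
  obtain ⟨u, hu⟩ := hF.exists_apply_eq hFc hδ hshift V
  exact ⟨u, hu, fun v hv => le_antisymm (hF.le_of_apply_le hδ hshift (hv.trans hu.symm).le)
    (hF.le_of_apply_le hδ hshift (hu.trans hv.symm).le)⟩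

end DegenerateElliptic

theorem G1.apply_le_apply_s12 {g : (Fin 4 → ℝ) → ℝ} (hg : G1 g) {q q' : Fin 4 → ℝ}
    (h0 : q' 0 ≤ q 0) (h1 : q 1 ≤ q' 1) (h2 : q' 2 ≤ q 2) (h3 : q 3 ≤ q' 3) :
    g q ≤ g q' := by
  obtain ⟨hg0, hg1, hg2, hg3⟩ := hg
  set q₁ := Function.update q 0 (q' 0)
  set q₂ := Function.update q₁ 1 (q' 1)
  set q₃ := Function.update q₂ 2 (q' 2)
  have hq' : q' = Function.update q₃ 3 (q' 3) := by
    ext k; fin_cases k <;> simp [q₁, q₂, q₃]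
  calc g q = g (Function.update q 0 (q 0)) := by rw [Function.update_eq_self]
    _ ≤ g q₁ := hg0 q h0
    _ = g (Function.update q₁ 1 (q₁ 1)) := by rw [Function.update_eq_self]
    _ ≤ g q₂ := hg1 q₁ (by simpa [q₁] using h1)
    _ = g (Function.update q₂ 2 (q₂ 2)) := by rw [Function.update_eq_self]
    _ ≤ g q₃ := hg2 q₂ (by simpa [q₁, q₂] using h2)
    _ = g (Function.update q₃ 3 (q₃ 3)) := by rw [Function.update_eq_self]
    _ ≤ g q' := hq' ▸ hg3 q₃ (by simpa [q₁, q₂, q₃] using h3)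

section Grid

theorem hstep_nonneg (Nh : ℕ) : 0 ≤ hstep Nh := inv_nonneg.2 (Nat.cast_nonneg Nh)

variable {Nh : ℕ} {U W : GridFun Nh} {i j : ZMod Nh}

theorem lapl_le_of_le_of_eq (hUW : U ≤ W) (hij : U i j = W i j) :
    lapl Nh U i j ≤ lapl Nh W i j := by
  unfold lapl
  gcongr ?_ / _
  linarith [hUW (i + 1) j, hUW (i - 1) j, hUW i (j + 1), hUW i (j - 1)]

theorem G1.apply_Dh_le_of_le_of_eq {g : (Fin 4 → ℝ) → ℝ} (hg : G1 g) (hUW : U ≤ W)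
    (hij : U i j = W i j) : g (Dh Nh W i j) ≤ g (Dh Nh U i j) := by
  have h := hstep_nonneg Nh
  apply hg.apply_le_apply_s12 <;>
    simp only [Dh, D1p, D2p, Matrix.cons_val, sub_add_cancel, hij] <;>
    gcongr ?_ / _ <;> linarith [hUW (i + 1) j, hUW (i - 1) j, hUW i (j + 1), hUW i (j - 1)]

/-- The left-hand side of the equation, uncurried so that grid functions form a space `ι → ℝ`.
-/
def hjOp (Nh : ℕ) (g : ZMod Nh → ZMod Nh → (Fin 4 → ℝ) → ℝ) (δ : ℝ)
    (u : ZMod Nh × ZMod Nh → ℝ) (p : ZMod Nh × ZMod Nh) : ℝ :=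
  δ * u p - lapl Nh (Function.curry u) p.1 p.2 + g p.1 p.2 (Dh Nh (Function.curry u) p.1 p.2)

variable {g : ZMod Nh → ZMod Nh → (Fin 4 → ℝ) → ℝ}

theorem degenerateElliptic_hjOp (hg : ∀ i j, G1 (g i j)) (δ : ℝ) :
    DegenerateElliptic (hjOp Nh g δ) := by
  rintro u v ⟨i, j⟩ huv hij
  have hUV : Function.curry u ≤ Function.curry v := fun a b => huv (a, b)
  have hlapl := lapl_le_of_le_of_eq hUV hij
  have hham := (hg i j).apply_Dh_le_of_le_of_eq hUV hij
  simp only [hjOp, hij]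
  linarith

theorem continuous_hjOp (hgc : ∀ i j, Continuous (g i j)) (δ : ℝ) :
    Continuous (hjOp Nh g δ) := by
  refine continuous_pi fun p => ?_
  simp only [hjOp, lapl, Dh, D1p, D2p, Function.curry_apply]
  fun_prop

theorem hjOp_add_const (δ : ℝ) (u : ZMod Nh × ZMod Nh → ℝ) (t : ℝ) :
    hjOp Nh g δ (u + fun _ => t) = hjOp Nh g δ u + fun _ => δ * t := by
  ext p
  simp only [hjOp, lapl, Dh, D1p, D2p, Function.curry_apply, Pi.add_apply,
    add_sub_add_right_eq_sub]
  ring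

end Grid

/-- Existence and uniqueness for the stationary discrete Hamilton-Jacobi equation. -/
theorem stationary_HJ_existence_uniqueness (Nh : ℕ) [NeZero Nh]
    (g : ZMod Nh → ZMod Nh → (Fin 4 → ℝ) → ℝ)
    (hgc : ∀ i j, Continuous (g i j)) (hg1 : ∀ i j, G1 (g i j))
    (δ : ℝ) (hδ : 0 < δ) (V : GridFun Nh) :
    ∃! U : GridFun Nh, ∀ i j,
      δ * U i j - lapl Nh U i j + g i j (Dh Nh U i j) = V i j := by
  have hsol := (degenerateElliptic_hjOp hg1 δ).existsUnique_apply_eq (continuous_hjOp hgc δ) hδ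
    (hjOp_add_const δ) (Function.uncurry V)
  refine ((Equiv.curry _ _ _).existsUnique_congr fun u => ?_).mp hsol
  simp [funext_iff, hjOp]
end
end

section
/- Discrete barrier inequality for the backward Caputo derivative: Fix α ∈ (0,1), Δt > 0, an integer N ≥ 1, and define ωᵏ := ((N−k)Δt)^α for k = 0,…,N. Then for every n = 0,…,N−1 the discrete backward Caputo derivative satisfies D̄^α_{Δt}ωⁿ = ρ_α^{−1}(ωⁿ − Σ_{k=n+1}^{N} c̄_n^k ω^k) ≥ α(1−α)/Γ(2−α). -/
open Real Finset

noncomputable section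

/-!
Write `m = N - n` and `b_i = (i+1)^(1-α) - i^(1-α)`. The interior coefficients are
`c̄_n^(n+1+i) = b_i - b_(i+1) ≥ 0` (concavity of `t ↦ t^(1-α)`), and they telescope to
`b_0 - b_(m-1) = 1 - b_(m-1)`. Since `ω^N = 0` and every `ω^k ≤ ω^n = (mΔt)^α`, the bracket in
`D̄ωⁿ` is at least `b_(m-1) (mΔt)^α`, and Bernoulli's inequality gives
`b_(m-1) ≥ (1-α) m^(-α)`. Hence `D̄ωⁿ ≥ (1-α)/Γ(2-α) ≥ α(1-α)/Γ(2-α)`.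
-/

theorem Real.mul_rpow_sub_one_le_rpow_sub_rpow_sub_one {p x : ℝ} (hp0 : 0 ≤ p) (hp1 : p ≤ 1)
    (hx : 1 ≤ x) : p * x ^ (p - 1) ≤ x ^ p - (x - 1) ^ p := by
  have hx0 : 0 < x := one_pos.trans_le hx
  have hinv : x⁻¹ ≤ 1 := inv_le_one_of_one_le₀ hx
  have hsplit : x - 1 = x * (1 + -x⁻¹) := by field_simp; ring
  have hpow : x ^ (p - 1) = x ^ p * x⁻¹ := by rw [rpow_sub_one hx0.ne', div_eq_mul_inv]
  have hbound : (x - 1) ^ p ≤ x ^ p - p * x ^ (p - 1) :=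
    calc (x - 1) ^ p = x ^ p * (1 + -x⁻¹) ^ p := by
          rw [hsplit, mul_rpow hx0.le (by linarith)]
      _ ≤ x ^ p * (1 + p * -x⁻¹) := by
          gcongr
          exact rpow_one_add_le_one_add_mul_self (neg_le_neg hinv) hp0 hp1
      _ = x ^ p - p * x ^ (p - 1) := by rw [hpow]; ring
  linarith

theorem Real.rpow_add_two_add_rpow_le {p x : ℝ} (hp0 : 0 ≤ p) (hp1 : p ≤ 1) (hx : 0 ≤ x) :
    (x + 2) ^ p + x ^ p ≤ 2 * (x + 1) ^ p := by
  have hmid := (concaveOn_rpow hp0 hp1).2 (Set.mem_Ici.mpr hx)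
    (Set.mem_Ici.mpr (by linarith : 0 ≤ x + 2)) (by norm_num : (0 : ℝ) ≤ 1 / 2)
    (by norm_num : (0 : ℝ) ≤ 1 / 2) (by norm_num)
  simp only [smul_eq_mul] at hmid
  rw [show 1 / 2 * x + 1 / 2 * (x + 2) = x + 1 by ring] at hmid
  linarith

theorem Finset.sum_sub_succ_mul_le_of_antitone {g w : ℕ → ℝ} {A : ℝ} {M : ℕ} (hg : Antitone g)
    (hw : ∀ i < M, w i ≤ A) :
    ∑ i ∈ range M, (g i - g (i + 1)) * w i ≤ (g 0 - g M) * A := by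
  calc ∑ i ∈ range M, (g i - g (i + 1)) * w i
      ≤ ∑ i ∈ range M, (g i - g (i + 1)) * A := by
        refine sum_le_sum fun i hi => ?_
        exact mul_le_mul_of_nonneg_left (hw i (mem_range.mp hi))
          (sub_nonneg.mpr (hg (Nat.le_succ i)))
    _ = (g 0 - g M) * A := by rw [← sum_mul, sum_range_sub']

def l1Weight (p : ℝ) (i : ℕ) : ℝ := ((i : ℝ) + 1) ^ p - (i : ℝ) ^ p

theorem l1Weight_zero {p : ℝ} (hp : p ≠ 0) : l1Weight p 0 = 1 := by
  simp [l1Weight, zero_rpow hp]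

theorem l1Weight_antitone {p : ℝ} (hp0 : 0 ≤ p) (hp1 : p ≤ 1) : Antitone (l1Weight p) := by
  refine antitone_nat_of_succ_le fun i => ?_
  have := rpow_add_two_add_rpow_le hp0 hp1 (Nat.cast_nonneg (α := ℝ) i)
  simp only [l1Weight, Nat.cast_succ]
  rw [show (i : ℝ) + 1 + 1 = i + 2 by ring]
  linarith

theorem mul_rpow_sub_one_le_l1Weight {p : ℝ} (hp0 : 0 ≤ p) (hp1 : p ≤ 1) (i : ℕ) :
    p * ((i : ℝ) + 1) ^ (p - 1) ≤ l1Weight p i := by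
  have := mul_rpow_sub_one_le_rpow_sub_rpow_sub_one hp0 hp1
    (le_add_of_nonneg_left (Nat.cast_nonneg (α := ℝ) i))
  rwa [add_sub_cancel_right] at this

theorem cB_eq_l1Weight_sub (α : ℝ) {N n i : ℕ} (hi : n + 1 + i ≠ N) :
    cB α N n (n + 1 + i) = l1Weight (1 - α) i - l1Weight (1 - α) (i + 1) := by
  rw [cB, if_neg hi, l1Weight, l1Weight]
  push_cast
  ring_nf

theorem sum_cB_mul_eq_of_eq_zero (α : ℝ) {w : ℕ → ℝ} {n M : ℕ} (hw : w (n + M + 1) = 0) :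
    ∑ k ∈ Icc (n + 1) (n + M + 1), cB α (n + M + 1) n k * w k
      = ∑ i ∈ range M, (l1Weight (1 - α) i - l1Weight (1 - α) (i + 1)) * w (n + 1 + i) := by
  rw [← Ico_add_one_right_eq_Icc, sum_Ico_eq_sum_range,
    show n + M + 1 + 1 - (n + 1) = M + 1 by omega, sum_range_succ,
    show n + 1 + M = n + M + 1 by omega, hw, mul_zero, add_zero]
  exact sum_congr rfl fun i hi => by
    rw [cB_eq_l1Weight_sub α (by have := mem_range.mp hi; omega)]

theorem DB_barrier_eq {α Δt : ℝ} (hα : α ≠ 0) (hΔt : 0 < Δt) (n M : ℕ) :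
    DB α Δt (n + M + 1) (fun k => ((((n + M + 1 : ℕ) : ℝ) - k) * Δt) ^ α) n
      = (((M : ℝ) + 1) ^ α - ∑ i ∈ range M,
          (l1Weight (1 - α) i - l1Weight (1 - α) (i + 1)) * ((M : ℝ) - i) ^ α)
        / Gamma (2 - α) := by
  rw [DB, sum_cB_mul_eq_of_eq_zero α (by simp [zero_rpow hα])]
  have hterm : ∀ i ∈ range M,
      (l1Weight (1 - α) i - l1Weight (1 - α) (i + 1))
        * ((((n + M + 1 : ℕ) : ℝ) - (n + 1 + i : ℕ)) * Δt) ^ α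
      = (l1Weight (1 - α) i - l1Weight (1 - α) (i + 1)) * ((M : ℝ) - i) ^ α * Δt ^ α := by
    intro i hi
    have hiM : (i : ℝ) ≤ M := by exact_mod_cast (mem_range.mp hi).le
    rw [mul_assoc, ← mul_rpow (by linarith) hΔt.le]
    push_cast
    ring_nf
  rw [sum_congr rfl hterm, ← sum_mul, rhoA,
    show ((n + M + 1 : ℕ) : ℝ) - n = M + 1 by push_cast; ring,
    mul_rpow (by positivity) hΔt.le]
  field_simp [(rpow_pos_of_pos hΔt α).ne']

theorem one_sub_le_barrier_sum {α : ℝ} (hα0 : 0 ≤ α) (hα1 : α < 1) (M : ℕ) :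
    1 - α ≤ ((M : ℝ) + 1) ^ α - ∑ i ∈ range M,
      (l1Weight (1 - α) i - l1Weight (1 - α) (i + 1)) * ((M : ℝ) - i) ^ α := by
  have hp0 : 0 ≤ 1 - α := by linarith
  have hp1 : 1 - α ≤ 1 := by linarith
  have hM : (0 : ℝ) < M + 1 := by positivity
  have hsum := sum_sub_succ_mul_le_of_antitone (w := fun i => ((M : ℝ) - i) ^ α)
    (A := ((M : ℝ) + 1) ^ α) (l1Weight_antitone hp0 hp1) fun i hi => by
      have hiM : (i : ℝ) ≤ M := by exact_mod_cast hi.le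
      exact rpow_le_rpow (by linarith) (by linarith [Nat.cast_nonneg (α := ℝ) i]) hα0
  rw [l1Weight_zero (by linarith)] at hsum
  have hlast := mul_le_mul_of_nonneg_right (mul_rpow_sub_one_le_l1Weight hp0 hp1 M)
    (rpow_pos_of_pos hM α).le
  rw [mul_assoc, ← rpow_add hM, show 1 - α - 1 + α = 0 by ring, rpow_zero, mul_one] at hlast
  linarith

theorem discrete_barrier_inequality_general (α Δt : ℝ) (hα : α ∈ Set.Ioo (0 : ℝ) 1)
    (hΔt : 0 < Δt) (N : ℕ) :
    ∀ n < N, α * (1 - α) / Real.Gamma (2 - α)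
      ≤ DB α Δt N (fun k => (((N : ℝ) - (k : ℝ)) * Δt) ^ α) n := by
  intro n hn
  obtain ⟨hα0, hα1⟩ := hα
  obtain ⟨M, rfl⟩ : ∃ M, N = n + M + 1 := ⟨N - n - 1, by omega⟩
  rw [DB_barrier_eq hα0.ne' hΔt]
  gcongr
  · exact (Gamma_pos_of_pos (by linarith)).le
  · calc α * (1 - α) ≤ 1 - α := by nlinarith
      _ ≤ _ := one_sub_le_barrier_sum hα0.le hα1 M

/-- Discrete barrier inequality for the backward discrete Caputo derivative of
`ω^k = ((N-k)Δt)^α`. -/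
theorem discrete_barrier_inequality (α Δt : ℝ) (hα : α ∈ Set.Ioo (0 : ℝ) 1)
    (hΔt : 0 < Δt) (N : ℕ) (hN : 1 ≤ N) :
    ∀ n < N, α * (1 - α) / Real.Gamma (2 - α)
      ≤ DB α Δt N (fun k => (((N : ℝ) - (k : ℝ)) * Δt) ^ α) n :=
  discrete_barrier_inequality_general α Δt hα hΔt N
end
end

section
/- Continuous fractional integration by parts with Caputo derivatives: Let α ∈ (0,1), T > 0 and let φ, κ : [0,T] → ℝ be continuously differentiable. Then ∫₀ᵀ (∂^α_{(0,t]}φ)(t)·κ(t) dt + φ(0)·(I^{1−α}_{[t,T)}κ)(0) = ∫₀ᵀ φ(t)·(∂^α_{[t,T)}κ)(t) dt + κ(T)·(I^{1−α}_{(0,t]}φ)(T), i.e. ∫₀ᵀ [(1/Γ(1−α))∫₀ᵗ φ′(s)(t−s)^{−α} ds]·κ(t) dt + φ(0)·(1/Γ(1−α))∫₀ᵀ κ(s)·s^{−α} ds = ∫₀ᵀ φ(t)·[−(1/Γ(1−α))∫ₜᵀ κ′(s)(s−t)^{−α} ds] dt + κ(T)·(1/Γ(1−α))∫₀ᵀ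 φ(s)(T−s)^{−α} ds. -/
/-!
Swapping the order of integration over the triangle `0 < s < t ≤ T` turns the first term into
`∫₀ᵀ φ'(s) J(s) ds`, where `J(s) = ∫ₛᵀ κ(t) (t - s)^(-α) dt`. Writing `κ = κ(T) - ∫ κ'` and swapping
once more gives `J(s) = ∫ₛᵀ w`, where `w(t) = κ(T) (T - t)^(-α) - ∫ₜᵀ κ'(u) (u - t)^(-α) du`: both
equal `(κ(T) (T - s)^(1-α) - ∫ₛᵀ κ'(u) (u - s)^(1-α) du) / (1 - α)`. The right-hand side is
`Γ(1-α)⁻¹ ∫₀ᵀ φ w`, and integrating `φ` by parts against `w` yields `φ(0) J(0) + ∫₀ᵀ φ' J`.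
-/

open Real MeasureTheory Set Function intervalIntegral

namespace FractionalIBP

def triangle (a b : ℝ) : Set (ℝ × ℝ) := {p | a < p.2 ∧ p.2 < p.1 ∧ p.1 ≤ b}

theorem measurableSet_triangle (a b : ℝ) : MeasurableSet (triangle a b) :=
  (measurableSet_lt measurable_const measurable_snd).inter
    ((measurableSet_lt measurable_snd measurable_fst).inter
      (measurableSet_le measurable_fst measurable_const))

variable {a b : ℝ} {F : ℝ → ℝ → ℝ}

theorem integral_indicator_triangle_left (t : ℝ) :
    ∫ s, (triangle a b).indicator (uncurry F) (t, s) =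
      (Ioc a b).indicator (fun t => ∫ s in a..t, F t s) t := by
  by_cases ht : t ∈ Ioc a b
  · have hslice : (fun s => (triangle a b).indicator (uncurry F) (t, s)) =
        (Ioo a t).indicator (F t) := by
      ext s
      simp only [indicator, triangle, mem_ofPred_eq, mem_Ioo, uncurry_apply_pair, ht.2, and_true]
    rw [indicator_of_mem ht, hslice, MeasureTheory.integral_indicator measurableSet_Ioo,
      integral_of_le ht.1.le, integral_Ioc_eq_integral_Ioo]
  · rw [indicator_of_notMem ht]
    refine integral_eq_zero_of_ae (Filter.Eventually.of_forall fun s => indicator_of_notMem ?_ _)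
    rintro ⟨has, hst, htb⟩
    exact ht ⟨has.trans hst, htb⟩

theorem integral_indicator_triangle_right (s : ℝ) :
    ∫ t, (triangle a b).indicator (uncurry F) (t, s) =
      (Ioc a b).indicator (fun s => ∫ t in s..b, F t s) s := by
  by_cases hs : s ∈ Ioc a b
  · have hslice : (fun t => (triangle a b).indicator (uncurry F) (t, s)) =
        (Ioc s b).indicator (fun t => F t s) := by
      ext t
      simp only [indicator, triangle, mem_ofPred_eq, mem_Ioc, uncurry_apply_pair, hs.1, true_and]
    rw [indicator_of_mem hs, hslice, MeasureTheory.integral_indicator measurableSet_Ioc,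
      integral_of_le hs.2]
  · rw [indicator_of_notMem hs]
    refine integral_eq_zero_of_ae (Filter.Eventually.of_forall fun t => indicator_of_notMem ?_ _)
    rintro ⟨has, hst, htb⟩
    exact hs ⟨has, (hst.trans_le htb).le⟩

theorem integrable_indicator_triangle (hF : IntegrableOn (uncurry F) (triangle a b)) :
    Integrable ((triangle a b).indicator (uncurry F)) (volume.prod volume) := by
  rw [← Measure.volume_eq_prod]
  exact (integrable_indicator_iff (measurableSet_triangle a b)).2 hF

theorem integral_integral_triangle_swap (hab : a ≤ b)
    (hF : IntegrableOn (uncurry F) (triangle a b)) :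
    ∫ t in a..b, ∫ s in a..t, F t s = ∫ s in a..b, ∫ t in s..b, F t s := by
  have h := integral_integral_swap (f := fun t s => (triangle a b).indicator (uncurry F) (t, s))
    (integrable_indicator_triangle hF)
  simp only [integral_indicator_triangle_left, integral_indicator_triangle_right,
    MeasureTheory.integral_indicator measurableSet_Ioc] at h
  rwa [integral_of_le hab, integral_of_le hab]

theorem intervalIntegrable_integral_triangle_right (hab : a ≤ b)
    (hF : IntegrableOn (uncurry F) (triangle a b)) :
    IntervalIntegrable (fun s => ∫ t in s..b, F t s) volume a b := by
  have h := (integrable_indicator_triangle hF).integral_prod_right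
  simp only [integral_indicator_triangle_right] at h
  rw [intervalIntegrable_iff_integrableOn_Ioc_of_le hab]
  exact (integrable_indicator_iff measurableSet_Ioc).1 h

theorem triangle_subset_Ioc_prod_Ioc : triangle a b ⊆ Ioc a b ×ˢ Ioc a b :=
  fun _ ⟨has, hst, htb⟩ => ⟨⟨has.trans hst, htb⟩, ⟨has, (hst.trans_le htb).le⟩⟩

theorem integrableOn_triangle_mul {f g : ℝ → ℝ} (hf : IntervalIntegrable f volume a b)
    (hg : IntervalIntegrable g volume a b) :
    IntegrableOn (fun p : ℝ × ℝ => g p.1 * f p.2) (triangle a b) := by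
  refine IntegrableOn.mono_set ?_ triangle_subset_Ioc_prod_Ioc
  rw [IntegrableOn, Measure.volume_eq_prod, ← Measure.prod_restrict]
  exact hg.1.mul_prod hf.1

-- The integrand is bounded by `sup |g|` times the convolution integrand `f(s) k(t - s)` of two
-- integrable functions, which is integrable on the plane.
theorem integrableOn_triangle_mul_kernel {f g k : ℝ → ℝ} (hf : IntervalIntegrable f volume a b)
    (hg : ContinuousOn g (Icc a b)) (hk : IntervalIntegrable k volume 0 (b - a)) :
    IntegrableOn (fun p : ℝ × ℝ => g p.1 * (f p.2 * k (p.1 - p.2))) (triangle a b) := by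
  have hconv : Integrable (fun p : ℝ × ℝ =>
      (Ioc a b).indicator f p.2 * (Ioc 0 (b - a)).indicator k (p.1 - p.2)) (volume.prod volume) :=
    (hf.1.integrable_indicator measurableSet_Ioc).convolution_integrand
      (ContinuousLinearMap.mul ℝ ℝ) (hk.1.integrable_indicator measurableSet_Ioc)
  obtain ⟨C, hC⟩ := isCompact_Icc.exists_bound_of_continuousOn hg
  have hfst : MapsTo Prod.fst (triangle a b) (Icc a b) :=
    fun p hp => ⟨(hp.1.trans hp.2.1).le, hp.2.2⟩
  refine IntegrableOn.congr_fun (f := fun p : ℝ × ℝ =>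
      g p.1 * ((Ioc a b).indicator f p.2 * (Ioc 0 (b - a)).indicator k (p.1 - p.2)))
    ?_ ?_ (measurableSet_triangle a b)
  · refine Integrable.bdd_mul (c := C) ?_ ?_ ?_
    · rw [Measure.volume_eq_prod]; exact hconv.integrableOn
    · exact ((hg.comp continuousOn_fst hfst).aestronglyMeasurable (measurableSet_triangle a b))
    · exact (ae_restrict_iff' (measurableSet_triangle a b)).2 (Filter.Eventually.of_forall
        fun p hp => hC _ (hfst hp))
  · rintro p ⟨has, hst, htb⟩
    have hs : p.2 ∈ Ioc a b := ⟨has, (hst.trans_le htb).le⟩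
    have hts : p.1 - p.2 ∈ Ioc 0 (b - a) := ⟨sub_pos.2 hst, by linarith⟩
    simp only [indicator_of_mem hs, indicator_of_mem hts]

theorem integral_mul_integral_mul_kernel_swap {f g k : ℝ → ℝ} (hab : a ≤ b)
    (hf : IntervalIntegrable f volume a b) (hg : ContinuousOn g (Icc a b))
    (hk : IntervalIntegrable k volume 0 (b - a)) :
    ∫ t in a..b, g t * ∫ s in a..t, f s * k (t - s) =
      ∫ s in a..b, f s * ∫ t in s..b, g t * k (t - s) :=
  calc ∫ t in a..b, g t * ∫ s in a..t, f s * k (t - s)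
      = ∫ t in a..b, ∫ s in a..t, g t * (f s * k (t - s)) := by
        simp only [intervalIntegral.integral_const_mul]
    _ = ∫ s in a..b, ∫ t in s..b, g t * (f s * k (t - s)) :=
        integral_integral_triangle_swap hab (integrableOn_triangle_mul_kernel hf hg hk)
    _ = ∫ s in a..b, f s * ∫ t in s..b, g t * k (t - s) := by
        simp only [mul_left_comm (g _), intervalIntegral.integral_const_mul]

theorem intervalIntegrable_integral_mul_kernel {g k : ℝ → ℝ} (hab : a ≤ b)
    (hg : ContinuousOn g (Icc a b)) (hk : IntervalIntegrable k volume 0 (b - a)) :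
    IntervalIntegrable (fun s => ∫ t in s..b, g t * k (t - s)) volume a b := by
  simpa only [one_mul] using intervalIntegrable_integral_triangle_right
    (F := fun t s => g t * (1 * k (t - s))) hab
    (integrableOn_triangle_mul_kernel intervalIntegrable_const hg hk)

section IntegrationByParts

variable {φ φ' w : ℝ → ℝ}

theorem integral_mul_eq_left_add_integral_deriv_mul (hab : a ≤ b)
    (hφ : ContinuousOn φ (Icc a b)) (hφd : ∀ t ∈ Ioo a b, HasDerivAt φ (φ' t) t)
    (hφ' : IntervalIntegrable φ' volume a b) (hw : IntervalIntegrable w volume a b) :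
    ∫ t in a..b, φ t * w t = φ a * (∫ t in a..b, w t) + ∫ s in a..b, φ' s * ∫ t in s..b, w t := by
  have hftc : ∀ t ∈ uIcc a b, φ t = φ a + ∫ s in a..t, φ' s := fun t ht => by
    rw [uIcc_of_le hab] at ht
    rw [integral_eq_sub_of_hasDerivAt_of_le ht.1 (hφ.mono (Icc_subset_Icc_right ht.2))
      (fun x hx => hφd x ⟨hx.1, hx.2.trans_le ht.2⟩) (hφ'.mono_set (by
        rw [uIcc_of_le hab, uIcc_of_le ht.1]; exact Icc_subset_Icc_right ht.2))]
    ring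
  have hprim : ContinuousOn (fun t => ∫ s in a..t, φ' s) (uIcc a b) :=
    continuousOn_primitive_interval' hφ' left_mem_uIcc
  have hint : IntervalIntegrable (fun t => ∫ s in a..t, w t * φ' s) volume a b := by
    simpa only [intervalIntegral.integral_const_mul] using hw.mul_continuousOn hprim
  calc ∫ t in a..b, φ t * w t
      = ∫ t in a..b, (φ a * w t + ∫ s in a..t, w t * φ' s) := integral_congr fun t ht => by
        rw [hftc t ht, intervalIntegral.integral_const_mul]; ring
    _ = φ a * (∫ t in a..b, w t) + ∫ t in a..b, ∫ s in a..t, w t * φ' s := by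
        rw [integral_add (hw.const_mul _) hint, intervalIntegral.integral_const_mul]
    _ = φ a * (∫ t in a..b, w t) + ∫ s in a..b, φ' s * ∫ t in s..b, w t := by
        rw [integral_integral_triangle_swap (F := fun t s => w t * φ' s) hab
          (integrableOn_triangle_mul hφ' hw)]
        congr 1
        exact integral_congr fun s _ => by rw [intervalIntegral.integral_mul_const, mul_comm]

theorem integral_mul_eq_right_sub_integral_deriv_mul (hab : a ≤ b)
    (hφ : ContinuousOn φ (Icc a b)) (hφd : ∀ t ∈ Ioo a b, HasDerivAt φ (φ' t) t)
    (hφ' : IntervalIntegrable φ' volume a b) (hw : IntervalIntegrable w volume a b) :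
    ∫ t in a..b, φ t * w t = φ b * (∫ t in a..b, w t) - ∫ u in a..b, φ' u * ∫ t in a..u, w t := by
  have hftc : ∀ t ∈ uIcc a b, φ t = φ b - ∫ u in t..b, φ' u := fun t ht => by
    rw [uIcc_of_le hab] at ht
    rw [integral_eq_sub_of_hasDerivAt_of_le ht.2 (hφ.mono (Icc_subset_Icc_left ht.1))
      (fun x hx => hφd x ⟨ht.1.trans_lt hx.1, hx.2⟩) (hφ'.mono_set (by
        rw [uIcc_of_le hab, uIcc_of_le ht.2]; exact Icc_subset_Icc_left ht.1))]
    ring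
  have hprim : ContinuousOn (fun t => ∫ u in t..b, φ' u) (uIcc a b) :=
    continuousOn_primitive_interval_left ((intervalIntegrable_iff' (by simp)).1 hφ')
  have hint : IntervalIntegrable (fun t => ∫ u in t..b, φ' u * w t) volume a b := by
    simpa only [intervalIntegral.integral_mul_const, mul_comm] using hw.mul_continuousOn hprim
  calc ∫ t in a..b, φ t * w t
      = ∫ t in a..b, (φ b * w t - ∫ u in t..b, φ' u * w t) := integral_congr fun t ht => by
        rw [hftc t ht, intervalIntegral.integral_mul_const]; ring
    _ = φ b * (∫ t in a..b, w t) - ∫ t in a..b, ∫ u in t..b, φ' u * w t := by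
        rw [integral_sub (hw.const_mul _) hint, intervalIntegral.integral_const_mul]
    _ = φ b * (∫ t in a..b, w t) - ∫ u in a..b, φ' u * ∫ t in a..u, w t := by
        rw [← integral_integral_triangle_swap (F := fun u t => φ' u * w t) hab
          (integrableOn_triangle_mul hw hφ')]
        congr 1
        exact integral_congr fun u _ => intervalIntegral.integral_const_mul _ _

end IntegrationByParts

section FractionalKernel

variable {α : ℝ}

theorem intervalIntegrable_inv_rpow (hα : α < 1) {c : ℝ} (hc : 0 ≤ c) :
    IntervalIntegrable (fun x : ℝ => (x ^ α)⁻¹) volume 0 c :=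
  (intervalIntegrable_rpow' (r := -α) (by linarith)).congr_uIoo fun x hx => by
    rw [uIoo_of_le hc] at hx
    exact rpow_neg hx.1.le α

theorem integral_inv_rpow (hα : α < 1) {c : ℝ} (hc : 0 ≤ c) :
    ∫ x in (0 : ℝ)..c, (x ^ α)⁻¹ = c ^ (1 - α) / (1 - α) := by
  have hα' : -α + 1 ≠ 0 := by linarith
  rw [integral_congr (g := fun x => x ^ (-α)) fun x hx => by
      rw [uIcc_of_le hc] at hx; exact (rpow_neg hx.1 α).symm,
    integral_rpow (Or.inl (by linarith)), zero_rpow hα', sub_zero, neg_add_eq_sub]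

theorem intervalIntegrable_inv_rpow_sub_const (hα : α < 1) (hab : a ≤ b) :
    IntervalIntegrable (fun t => ((t - a) ^ α)⁻¹) volume a b := by
  simpa using (intervalIntegrable_inv_rpow hα (sub_nonneg.2 hab)).comp_sub_right a

theorem intervalIntegrable_inv_rpow_const_sub (hα : α < 1) (hab : a ≤ b) :
    IntervalIntegrable (fun t => ((b - t) ^ α)⁻¹) volume a b := by
  simpa using ((intervalIntegrable_inv_rpow hα (sub_nonneg.2 hab)).comp_sub_left b).symm

theorem integral_inv_rpow_sub_const (hα : α < 1) (hab : a ≤ b) :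
    ∫ t in a..b, ((t - a) ^ α)⁻¹ = (b - a) ^ (1 - α) / (1 - α) := by
  rw [integral_comp_sub_right (fun x => (x ^ α)⁻¹), sub_self,
    integral_inv_rpow hα (sub_nonneg.2 hab)]

theorem integral_inv_rpow_const_sub (hα : α < 1) (hab : a ≤ b) :
    ∫ t in a..b, ((b - t) ^ α)⁻¹ = (b - a) ^ (1 - α) / (1 - α) := by
  rw [integral_comp_sub_left (fun x => (x ^ α)⁻¹), sub_self,
    integral_inv_rpow hα (sub_nonneg.2 hab)]

theorem integral_div_rpow_sub_eq_integral_sub_backward_caputo {κ κ' : ℝ → ℝ}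
    (hα : α < 1) (hab : a ≤ b) (hκ : ContinuousOn κ (Icc a b))
    (hκd : ∀ t ∈ Ioo a b, HasDerivAt κ (κ' t) t) (hκ' : ContinuousOn κ' (Icc a b)) :
    ∫ t in a..b, κ t / (t - a) ^ α =
      ∫ t in a..b, (κ b / (b - t) ^ α - ∫ u in t..b, κ' u / (u - t) ^ α) := by
  simp only [div_eq_mul_inv]
  have hk := intervalIntegrable_inv_rpow hα (sub_nonneg.2 hab)
  have hswap := integral_mul_integral_mul_kernel_swap (f := fun _ => 1) (k := fun x => (x ^ α)⁻¹)
    hab intervalIntegrable_const hκ' hk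
  simp only [one_mul] at hswap
  rw [integral_mul_eq_right_sub_integral_deriv_mul hab hκ hκd (hκ'.intervalIntegrable_of_Icc hab)
      (intervalIntegrable_inv_rpow_sub_const hα hab),
    integral_sub ((intervalIntegrable_inv_rpow_const_sub hα hab).const_mul _)
      (intervalIntegrable_integral_mul_kernel hab hκ' hk),
    intervalIntegral.integral_const_mul, ← hswap, integral_inv_rpow_sub_const hα hab,
    integral_inv_rpow_const_sub hα hab]
  congr 1
  refine integral_congr fun u hu => ?_
  rw [uIcc_of_le hab] at hu
  rw [integral_inv_rpow_sub_const hα hu.1, integral_inv_rpow_const_sub hα hu.1]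

end FractionalKernel

end FractionalIBP

open FractionalIBP

/-- Continuous fractional integration by parts with forward/backward Caputo
derivatives and Riemann-Liouville integrals. -/
theorem fractional_integration_by_parts (α T : ℝ) (hα : α ∈ Set.Ioo (0 : ℝ) 1)
    (hT : 0 < T) (φ φ' κ κ' : ℝ → ℝ)
    (hφ : ∀ t ∈ Set.Icc (0 : ℝ) T, HasDerivWithinAt φ (φ' t) (Set.Icc (0 : ℝ) T) t)
    (hφ' : ContinuousOn φ' (Set.Icc (0 : ℝ) T))
    (hκ : ∀ t ∈ Set.Icc (0 : ℝ) T, HasDerivWithinAt κ (κ' t) (Set.Icc (0 : ℝ) T) t)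
    (hκ' : ContinuousOn κ' (Set.Icc (0 : ℝ) T)) :
    (∫ t in (0 : ℝ)..T,
        ((Real.Gamma (1 - α))⁻¹ * ∫ s in (0 : ℝ)..t, φ' s / (t - s) ^ α) * κ t)
      + φ 0 * ((Real.Gamma (1 - α))⁻¹ * ∫ s in (0 : ℝ)..T, κ s / s ^ α)
    = (∫ t in (0 : ℝ)..T,
        φ t * (-(Real.Gamma (1 - α))⁻¹ * ∫ s in t..T, κ' s / (s - t) ^ α))
      + κ T * ((Real.Gamma (1 - α))⁻¹ * ∫ s in (0 : ℝ)..T, φ s / (T - s) ^ α) := by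
  have hα1 : α < 1 := hα.2
  have hφc : ContinuousOn φ (Icc 0 T) := fun t ht => (hφ t ht).continuousWithinAt
  have hκc : ContinuousOn κ (Icc 0 T) := fun t ht => (hκ t ht).continuousWithinAt
  have hφd : ∀ t ∈ Ioo 0 T, HasDerivAt φ (φ' t) t := fun t ht =>
    (hφ t (Ioo_subset_Icc_self ht)).hasDerivAt (Icc_mem_nhds ht.1 ht.2)
  have hκd : ∀ t ∈ Ioo 0 T, HasDerivAt κ (κ' t) t := fun t ht =>
    (hκ t (Ioo_subset_Icc_self ht)).hasDerivAt (Icc_mem_nhds ht.1 ht.2)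
  have hk := intervalIntegrable_inv_rpow hα1 (sub_nonneg.2 hT.le)
  have hcaputo : IntervalIntegrable (fun t => ∫ u in t..T, κ' u / (u - t) ^ α) volume 0 T := by
    simpa only [sub_zero, div_eq_mul_inv] using intervalIntegrable_integral_mul_kernel hT.le hκ' hk
  have hboundary : IntervalIntegrable (fun t => κ T / (T - t) ^ α) volume 0 T := by
    simpa only [div_eq_mul_inv] using
      (intervalIntegrable_inv_rpow_const_sub hα1 hT.le).const_mul (κ T)
  set w : ℝ → ℝ := fun t => κ T / (T - t) ^ α - ∫ u in t..T, κ' u / (u - t) ^ α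
  have hkey : ∀ s ∈ Icc 0 T, ∫ t in s..T, κ t / (t - s) ^ α = ∫ t in s..T, w t := fun s hs =>
    integral_div_rpow_sub_eq_integral_sub_backward_caputo hα1 hs.2
      (hκc.mono (Icc_subset_Icc_left hs.1)) (fun t ht => hκd t ⟨hs.1.trans_lt ht.1, ht.2⟩)
      (hκ'.mono (Icc_subset_Icc_left hs.1))
  have hswap : ∫ t in (0 : ℝ)..T, (∫ s in (0 : ℝ)..t, φ' s / (t - s) ^ α) * κ t =
      ∫ s in (0 : ℝ)..T, φ' s * ∫ t in s..T, κ t / (t - s) ^ α := by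
    simpa only [mul_comm (κ _), div_eq_mul_inv, sub_zero] using
      integral_mul_integral_mul_kernel_swap hT.le (hφ'.intervalIntegrable_of_Icc hT.le) hκc hk
  have hibp := integral_mul_eq_left_add_integral_deriv_mul hT.le hφc hφd
    (hφ'.intervalIntegrable_of_Icc hT.le) (hboundary.sub hcaputo)
  have hsplit : ∫ t in (0 : ℝ)..T, φ t * w t = κ T * (∫ s in (0 : ℝ)..T, φ s / (T - s) ^ α) -
      ∫ t in (0 : ℝ)..T, φ t * ∫ s in t..T, κ' s / (s - t) ^ α := by
    have hφc' : ContinuousOn φ (uIcc 0 T) := by rwa [uIcc_of_le hT.le]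
    simp only [w, mul_sub]
    rw [integral_sub (hboundary.continuousOn_mul hφc') (hcaputo.continuousOn_mul hφc'),
      ← intervalIntegral.integral_const_mul]
    simp only [mul_div_left_comm]
  have hκ0 : ∫ s in (0 : ℝ)..T, κ s / s ^ α = ∫ t in (0 : ℝ)..T, w t := by
    simpa only [sub_zero] using hkey 0 ⟨le_rfl, hT.le⟩
  simp only [mul_assoc, mul_left_comm (φ _), intervalIntegral.integral_const_mul]
  rw [hswap, hκ0, integral_congr fun s hs => by rw [hkey s (uIcc_of_le hT.le ▸ hs)]]
  linear_combination (Real.Gamma (1 - α))⁻¹ * (hsplit - hibp)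
end

section
/- Stability of the L1-scheme error recursion: Fix α ∈ (0,1) and set B_k := (k+1)^{1−α} − k^{1−α} for k ≥ 0 (so B₀ = 1 and (B_k) is decreasing). Let N ∈ ℕ⁺, C > 0, ρ > 0, let (eⁿ)_{n=0}^N be nonnegative reals with e⁰ = 0, and let (εⁿ)_{n=1}^N be nonnegative reals. Suppose that for every 0 ≤ n ≤ N−1: e^{n+1} ≤ (1 − B₁)eⁿ + Σ_{k=1}^{n−1}(B_k − B_{k+1})e^{n−k} + B_n e⁰ + Cρε^{n+1}. Then for every 1 ≤ n ≤ N: eⁿ ≤ Cρ·B_{n−1}^{−1}·max_{1≤k≤N} ε^k. -/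
/-!
The weights of the recursion are nonnegative and, since `B` telescopes, sum to `1`:
`(1 - B₁) + Σ_{k=1}^{n-1} (B_k - B_{k+1}) + B_n = 1`. The history part of the right-hand
side is therefore at most `(1 - B_n) K` whenever `e¹, …, eⁿ ≤ K`. Take `K = B_n⁻¹ M`,
where `M` bounds the forcing term; since `B` decreases, `B_{j-1}⁻¹ ≤ B_n⁻¹` for `j ≤ n`,
so strong induction gives `e^{n+1} ≤ (1 - B_n) K + M = K`.
-/

open Real Finset

noncomputable section

/-- the L1 weights `B_k = (k+1)^{1-α} - k^{1-α}` -/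
def Bcoef (α : ℝ) (k : ℕ) : ℝ := ((k : ℝ) + 1) ^ (1 - α) - (k : ℝ) ^ (1 - α)

section Bcoef

variable {α : ℝ}

lemma Bcoef_zero (hα : α < 1) : Bcoef α 0 = 1 := by
  simp [Bcoef, Real.zero_rpow (sub_ne_zero.mpr hα.ne')]

lemma Bcoef_pos (hα : α < 1) (k : ℕ) : 0 < Bcoef α k :=
  sub_pos.mpr <| Real.rpow_lt_rpow k.cast_nonneg (lt_add_one _) (sub_pos.mpr hα)

/-- `B_k` is the increment of the concave function `x ↦ x ^ (1 - α)` over `[k, k + 1]`. -/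
lemma Bcoef_antitone (hα : α ∈ Set.Ioo (0 : ℝ) 1) : Antitone (Bcoef α) := by
  refine antitone_nat_of_succ_le fun k ↦ ?_
  have hconc : ConcaveOn ℝ (Set.Ici 0) fun x : ℝ ↦ x ^ (1 - α) :=
    Real.concaveOn_rpow (by linarith [hα.2]) (by linarith [hα.1])
  have hslope := hconc.slope_anti_adjacent (x := (k : ℝ)) (y := k + 1) (z := k + 1 + 1)
    (Set.mem_Ici.mpr k.cast_nonneg) (Set.mem_Ici.mpr (by positivity)) (by linarith)
    (by linarith)
  simp only [add_sub_cancel_left, div_one] at hslope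
  simpa [Bcoef] using hslope

end Bcoef

def l1History (b e : ℕ → ℝ) (n : ℕ) : ℝ :=
  (1 - b 1) * e n + ∑ k ∈ Icc 1 (n - 1), (b k - b (k + 1)) * e (n - k)

lemma sum_Icc_one_sub_succ (b : ℕ → ℝ) {n : ℕ} (hn : 1 ≤ n) :
    ∑ k ∈ Icc 1 (n - 1), (b k - b (k + 1)) = b 1 - b n := by
  obtain ⟨n, rfl⟩ := Nat.exists_eq_add_of_le' hn
  rw [Nat.add_sub_cancel, ← Ico_add_one_right_eq_Icc, ← neg_sub, ← sum_Ico_sub b hn,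
    ← sum_neg_distrib]
  simp only [neg_sub]

lemma l1History_le {b e : ℕ → ℝ} (hb : Antitone b) (hb0 : b 0 = 1) (he0 : e 0 = 0)
    {n : ℕ} {K : ℝ} (heK : ∀ j, 1 ≤ j → j ≤ n → e j ≤ K) :
    l1History b e n ≤ (1 - b n) * K := by
  rcases Nat.eq_zero_or_pos n with rfl | hn
  · simp [l1History, he0, hb0]
  have hb1 : b 1 ≤ 1 := hb0 ▸ hb (Nat.zero_le 1)
  calc l1History b e n
      ≤ (1 - b 1) * K + ∑ k ∈ Icc 1 (n - 1), (b k - b (k + 1)) * K := by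
        refine add_le_add (mul_le_mul_of_nonneg_left (heK n hn le_rfl) (by linarith)) ?_
        refine sum_le_sum fun k hk ↦ ?_
        rw [mem_Icc] at hk
        exact mul_le_mul_of_nonneg_left (heK (n - k) (by omega) (by omega))
          (sub_nonneg.mpr (hb k.le_succ))
    _ = (1 - b n) * K := by
        rw [← sum_mul, sum_Icc_one_sub_succ b hn]
        ring

theorem le_inv_mul_of_l1_recursion {b e F : ℕ → ℝ} {N : ℕ} {M : ℝ} (hb : Antitone b)
    (hb_pos : ∀ k, 0 < b k) (hb0 : b 0 = 1) (hM : 0 ≤ M) (he0 : e 0 = 0)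
    (hF : ∀ n < N, F (n + 1) ≤ M)
    (hrec : ∀ n < N, e (n + 1) ≤ l1History b e n + b n * e 0 + F (n + 1)) :
    ∀ n, 1 ≤ n → n ≤ N → e n ≤ (b (n - 1))⁻¹ * M := by
  intro n
  induction n using Nat.strong_induction_on with
  | _ n ih =>
  intro hn hnN
  obtain ⟨m, rfl⟩ := Nat.exists_eq_add_of_le' hn
  rw [Nat.add_sub_cancel]
  set K := (b m)⁻¹ * M
  have hprev : ∀ j, 1 ≤ j → j ≤ m → e j ≤ K := fun j hj hjm ↦
    (ih j (by omega) hj (by omega)).trans <| mul_le_mul_of_nonneg_right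
      (inv_anti₀ (hb_pos m) (hb (by omega))) hM
  have hbK : b m * K = M := mul_inv_cancel_left₀ (hb_pos m).ne' M
  calc e (m + 1) ≤ (1 - b m) * K + b m * 0 + M := by
        grw [← hF m (by omega), ← l1History_le hb hb0 he0 hprev, ← he0]
        exact hrec m (by omega)
    _ = K := by rw [← hbK]; ring

theorem L1_error_recursion_stability_general (α : ℝ) (hα : α ∈ Set.Ioo (0 : ℝ) 1)
    (N : ℕ) (hN : 1 ≤ N) (C ρ : ℝ) (hC : 0 < C) (hρ : 0 < ρ)
    (e ε : ℕ → ℝ) (hε : ∀ n, 1 ≤ n → n ≤ N → 0 ≤ ε n)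
    (he0 : e 0 = 0)
    (hrec : ∀ n < N, e (n + 1) ≤ (1 - Bcoef α 1) * e n
        + (∑ k ∈ Finset.Icc 1 (n - 1), (Bcoef α k - Bcoef α (k + 1)) * e (n - k))
        + Bcoef α n * e 0 + C * ρ * ε (n + 1)) :
    ∀ n, 1 ≤ n → n ≤ N →
      e n ≤ C * ρ * (Bcoef α (n - 1))⁻¹ *
        (Finset.Icc 1 N).sup' (Finset.nonempty_Icc.mpr hN) ε := by
  set E := (Finset.Icc 1 N).sup' (Finset.nonempty_Icc.mpr hN) ε
  have hεE : ∀ n, 1 ≤ n → n ≤ N → ε n ≤ E := fun n h1 h2 ↦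
    le_sup' ε (mem_Icc.mpr ⟨h1, h2⟩)
  have hE : 0 ≤ E := (hε 1 le_rfl hN).trans (hεE 1 le_rfl hN)
  intro n hn hnN
  have hF : ∀ m < N, C * ρ * ε (m + 1) ≤ C * ρ * E := fun m hm ↦
    mul_le_mul_of_nonneg_left (hεE (m + 1) (by omega) hm) (by positivity)
  calc e n ≤ (Bcoef α (n - 1))⁻¹ * (C * ρ * E) :=
        le_inv_mul_of_l1_recursion (F := fun m ↦ C * ρ * ε m) (Bcoef_antitone hα)
          (Bcoef_pos hα.2) (Bcoef_zero hα.2) (by positivity) he0 hF hrec n hn hnN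
    _ = C * ρ * (Bcoef α (n - 1))⁻¹ * E := by ring

/-- Stability of the L1-scheme error recursion. -/
theorem L1_error_recursion_stability (α : ℝ) (hα : α ∈ Set.Ioo (0 : ℝ) 1)
    (N : ℕ) (hN : 1 ≤ N) (C ρ : ℝ) (hC : 0 < C) (hρ : 0 < ρ)
    (e ε : ℕ → ℝ) (he : ∀ n ≤ N, 0 ≤ e n) (hε : ∀ n, 1 ≤ n → n ≤ N → 0 ≤ ε n)
    (he0 : e 0 = 0)
    (hrec : ∀ n < N, e (n + 1) ≤ (1 - Bcoef α 1) * e n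
        + (∑ k ∈ Finset.Icc 1 (n - 1), (Bcoef α k - Bcoef α (k + 1)) * e (n - k))
        + Bcoef α n * e 0 + C * ρ * ε (n + 1)) :
    ∀ n, 1 ≤ n → n ≤ N →
      e n ≤ C * ρ * (Bcoef α (n - 1))⁻¹ *
        (Finset.Icc 1 N).sup' (Finset.nonempty_Icc.mpr hN) ε :=
  L1_error_recursion_stability_general α hα N hN C ρ hC hρ e ε hε he0 hrec
end
end
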